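/- arXiv:2510.27435 — 11 statements merged into one kernel-verified Lean document; each statement's English description precedes it below -/
import Mathlib

section
/- Let h : ℕ → ℕ satisfy h(n) ≥ 1 for all n and limsup_n h(n) = ∞. Then for every set F ⊆ ω^ω, the following are equivalent: (1) F ∈ fN(h); (2) there is a sequence (S_n)_{n∈ℕ} with S_n ⊆ ω^n and ∑_n |S_n|/h(n) < ∞ such that F ⊆ {x ∈ ω^ω : x↾n ∈ S_n for infinitely many n}. -/
open Filter Set

/-- The basic clopen set `[σ]` in the Baire space determined by a finite sequence `σ`. -/
def cylinder (σ : List ℕ) : Set (ℕ → ℕ) :=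
  {x | ∀ i : Fin σ.length, x i = σ.get i}

/-- `limsup_n h(n) = ∞`, i.e. `h` takes arbitrarily large values frequently. -/
def LimsupInfty (h : ℕ → ℕ) : Prop :=
  ∀ m : ℕ, ∃ᶠ n in Filter.atTop, m ≤ h n

/-- The family `fN(h)` of fake null sets: `F ∈ fN(h)` iff for every `ε > 0` there is a
sequence of finite sequences `σ_n` with `∑ 1/h(|σ_n|) < ε` covering `F`. -/
def fN (h : ℕ → ℕ) (F : Set (ℕ → ℕ)) : Prop :=
  ∀ ε : ℝ, 0 < ε →
    ∃ σ : ℕ → List ℕ,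
      Summable (fun n => (1 : ℝ) / (h (σ n).length : ℝ)) ∧
      (∑' n, (1 : ℝ) / (h (σ n).length : ℝ)) < ε ∧
      F ⊆ ⋃ n, cylinder (σ n)

/-- The restriction of `x` to the interval `[l, u)`, extended by `0` elsewhere. -/
def restrIco (x : ℕ → ℕ) (l u : ℕ) : ℕ → ℕ :=
  fun i => if l ≤ i ∧ i < u then x i else 0

/-- `J` is a set of patterns on the interval `[l, u)`: every element vanishes off `[l, u)`. -/
def SuppIco (l u : ℕ) (J : Set (ℕ → ℕ)) : Prop :=
  ∀ σ ∈ J, ∀ i, ¬ (l ≤ i ∧ i < u) → σ i = 0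

/-- The family `fE(h)`: partition `ℕ` into consecutive nonempty intervals `I_n = [a n, a (n+1))`
(`a 0 = 0`, `a` strictly increasing), patterns `J_n ⊆ ω^{I_n}` with `∑ |J_n|/h(|I_n|) < ∞`,
and `F ⊆ {x : x↾I_n ∈ J_n for all but finitely many n}`. -/
def fE (h : ℕ → ℕ) (F : Set (ℕ → ℕ)) : Prop :=
  ∃ a : ℕ → ℕ, a 0 = 0 ∧ StrictMono a ∧
    ∃ J : ℕ → Set (ℕ → ℕ),
      (∀ n, SuppIco (a n) (a (n+1)) (J n)) ∧
      (∀ n, (J n).Finite) ∧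
      Summable (fun n => ((J n).ncard : ℝ) / (h (a (n+1) - a n) : ℝ)) ∧
      F ⊆ {x | ∀ᶠ n in Filter.atTop, restrIco x (a n) (a (n+1)) ∈ J n}

/-- The family `fS(h)` of fake small sets: as `fE(h)` but with
`x↾I_n ∈ J_n` for infinitely many `n`. -/
def fS (h : ℕ → ℕ) (F : Set (ℕ → ℕ)) : Prop :=
  ∃ a : ℕ → ℕ, a 0 = 0 ∧ StrictMono a ∧
    ∃ J : ℕ → Set (ℕ → ℕ),
      (∀ n, SuppIco (a n) (a (n+1)) (J n)) ∧
      (∀ n, (J n).Finite) ∧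
      Summable (fun n => ((J n).ncard : ℝ) / (h (a (n+1) - a n) : ℝ)) ∧
      F ⊆ {x | ∃ᶠ n in Filter.atTop, restrIco x (a n) (a (n+1)) ∈ J n}

/-- The family `fE(Fin)`: as `fE(h)` but one only requires each pattern set `J_n` to be finite. -/
def fEFin (F : Set (ℕ → ℕ)) : Prop :=
  ∃ a : ℕ → ℕ, a 0 = 0 ∧ StrictMono a ∧
    ∃ J : ℕ → Set (ℕ → ℕ),
      (∀ n, SuppIco (a n) (a (n+1)) (J n)) ∧
      (∀ n, (J n).Finite) ∧
      F ⊆ {x | ∀ᶠ n in Filter.atTop, restrIco x (a n) (a (n+1)) ∈ J n}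

/-- The family `fS(Fin)`: as `fS(h)` but one only requires each pattern set `J_n` to be finite. -/
def fSFin (F : Set (ℕ → ℕ)) : Prop :=
  ∃ a : ℕ → ℕ, a 0 = 0 ∧ StrictMono a ∧
    ∃ J : ℕ → Set (ℕ → ℕ),
      (∀ n, SuppIco (a n) (a (n+1)) (J n)) ∧
      (∀ n, (J n).Finite) ∧
      F ⊆ {x | ∃ᶠ n in Filter.atTop, restrIco x (a n) (a (n+1)) ∈ J n}

/-- The family `fN(Fin)`: there are finite `S_n ⊆ ω^n` with
`F ⊆ {x : x↾n ∈ S_n for infinitely many n}`. -/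
def fNFin (F : Set (ℕ → ℕ)) : Prop :=
  ∃ S : (n : ℕ) → Set (Fin n → ℕ),
    (∀ n, (S n).Finite) ∧
    F ⊆ {x | ∃ᶠ n in Filter.atTop, (fun i : Fin n => x i) ∈ S n}

/-- The σ-ideal `M_-`: there are `x_F ∈ ω^ω` and a partition of `ℕ` into consecutive nonempty
intervals `I_n = [a n, a (n+1))` with `F ⊆ {x : x↾I_n ≠ x_F↾I_n for all but finitely many n}`. -/
def Mminus (F : Set (ℕ → ℕ)) : Prop :=
  ∃ xF : ℕ → ℕ, ∃ a : ℕ → ℕ, a 0 = 0 ∧ StrictMono a ∧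
    F ⊆ {x | ∀ᶠ n in Filter.atTop, ∃ i, a n ≤ i ∧ i < a (n+1) ∧ x i ≠ xF i}

/-!
A cover of weight `< ε` only uses lengths `ℓ` with `h ℓ > 1 / ε`. Merging covers of weights `2⁻ᵐ`
therefore gives one summable family of cylinders in which every `x ∈ F` lies in cylinders of
arbitrarily large length; its members of length `n` form `S n`, and `∑ |S n| / h n` is at most the
total weight. Conversely, the cylinders of the `S n` with `n ≥ N` cover `F` with weight the tail
`∑_{n ≥ N} |S n| / h n`, and since `limsup h = ∞` this cover can be padded to an `ℕ`-indexed one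
by cylinders of arbitrarily small total weight.
-/

lemma mem_cylinder_ofFn (x : ℕ → ℕ) (n : ℕ) : x ∈ cylinder (List.ofFn fun i : Fin n => x i) := by
  intro i
  simp

lemma ofFn_eq_of_mem_cylinder {x : ℕ → ℕ} {σ : List ℕ} (hx : x ∈ cylinder σ) :
    List.ofFn (fun i : Fin σ.length => x i) = σ :=
  List.ext_get (by simp) fun i _ hi => by simpa using hx ⟨i, hi⟩

lemma LimsupInfty.exists_one_div_lt {h : ℕ → ℕ} (hlim : LimsupInfty h) {t : ℝ} (ht : 0 < t) :
    ∃ d, 1 / (h d : ℝ) < t := by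
  obtain ⟨d, hd⟩ := (hlim (⌈1 / t⌉₊ + 1)).exists
  have hlt : 1 / t < h d := (Nat.le_ceil _).trans_lt (by exact_mod_cast hd)
  exact ⟨d, (one_div_lt ((one_div_pos.2 ht).trans hlt) ht).2 hlt⟩

lemma finite_preimage_singleton_of_summable {β : Type*} {g : β → ℕ} {v : ℕ → ℝ}
    (hv : ∀ n, 0 < v n) (hs : Summable (v ∘ g)) (n : ℕ) : (g ⁻¹' {n}).Finite := by
  by_contra hinf
  have : Infinite (g ⁻¹' {n}) := infinite_coe_iff.2 hinf
  have hconst : Summable fun _ : g ⁻¹' {n} => v n :=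
    (hs.subtype _).congr fun b => congrArg v b.2
  exact (hv n).ne' ((summable_const_iff _).1 hconst)

lemma summable_ncard_preimage_singleton_mul {β : Type*} {g : β → ℕ} {v : ℕ → ℝ}
    (hv : ∀ n, 0 ≤ v n) (hs : Summable (v ∘ g)) :
    Summable fun n => ((g ⁻¹' {n}).ncard : ℝ) * v n := by
  have hsigma := (Equiv.sigmaFiberEquiv g).summable_iff.2 hs
  refine ((summable_sigma_of_nonneg fun _ => hv _).1 hsigma).2.congr fun n => ?_
  have hfiber : ∀ b : {b // g b = n}, v (g (Equiv.sigmaFiberEquiv g ⟨n, b⟩)) = v n :=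
    fun b => congrArg v b.2
  rw [tsum_congr hfiber, tsum_const, nsmul_eq_mul]
  rfl

lemma exists_nat_cover_of_countable {h : ℕ → ℕ} (hlim : LimsupInfty h) {ι : Type*} [Countable ι]
    (σ : ι → List ℕ) (hs : Summable fun i => 1 / (h (σ i).length : ℝ)) {ε : ℝ}
    (hε : ∑' i, 1 / (h (σ i).length : ℝ) < ε) :
    ∃ τ : ℕ → List ℕ, Summable (fun n => 1 / (h (τ n).length : ℝ)) ∧
      ∑' n, 1 / (h (τ n).length : ℝ) < ε ∧ ⋃ i, cylinder (σ i) ⊆ ⋃ n, cylinder (τ n) := by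
  obtain ⟨δ, hδ, hδε⟩ : ∃ δ > 0, ∑' i, 1 / (h (σ i).length : ℝ) + δ = ε :=
    ⟨ε - ∑' i, 1 / (h (σ i).length : ℝ), sub_pos.2 hε, by ring⟩
  -- `ι` may be finite: pad with cylinders of total weight `≤ δ / 2`
  choose d hd using fun k : ℕ => hlim.exists_one_div_lt (t := δ / 2 / 2 / 2 ^ k) (by positivity)
  let ρ : ι ⊕ ℕ → List ℕ := Sum.elim σ fun k => List.replicate (d k) 0
  let w : ι ⊕ ℕ → ℝ := fun j => 1 / (h (ρ j).length : ℝ)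
  have hpad_le : ∀ k, w (.inr k) ≤ δ / 2 / 2 / 2 ^ k := fun k => by
    simpa [w, ρ] using (hd k).le
  have hpad : Summable (w ∘ Sum.inr) :=
    (hasSum_geometric_two' (δ / 2)).summable.of_nonneg_of_le
      (fun _ => one_div_nonneg.2 (Nat.cast_nonneg _)) hpad_le
  have hw : Summable w := Summable.sum w hs hpad
  have hw_lt : ∑' j, w j < ε := by
    have hpad_sum : ∑' k, w (.inr k) ≤ δ / 2 :=
      (hpad.tsum_le_tsum hpad_le (hasSum_geometric_two' (δ / 2)).summable).trans
        (hasSum_geometric_two' (δ / 2)).tsum_eq.le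
    calc ∑' j, w j = ∑' i, 1 / (h (σ i).length : ℝ) + ∑' k, w (.inr k) := Summable.tsum_sum hs hpad
      _ < ε := by linarith
  obtain ⟨_⟩ := nonempty_denumerable (ι ⊕ ℕ)
  let e := (Denumerable.eqv (ι ⊕ ℕ)).symm
  refine ⟨ρ ∘ e, e.summable_iff.2 hw, by rwa [← e.tsum_eq] at hw_lt, ?_⟩
  refine iUnion_subset fun i => subset_iUnion_of_subset (e.symm (.inl i)) ?_
  simp [ρ]

lemma fN.exists_summable_cover_long {h : ℕ → ℕ} (h1 : ∀ n, 1 ≤ h n) {F : Set (ℕ → ℕ)}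
    (hF : fN h F) :
    ∃ σ : ℕ × ℕ → List ℕ, Summable (fun p => 1 / (h (σ p).length : ℝ)) ∧
      ∀ x ∈ F, ∀ L, ∃ p, L < (σ p).length ∧ x ∈ cylinder (σ p) := by
  choose σ hs hlt hcov using fun m : ℕ => hF ((1 / 2) ^ m) (by positivity)
  refine ⟨fun p => σ p.1 p.2, ?_, fun x hx L => ?_⟩
  · rw [summable_prod_of_nonneg fun _ => by positivity]
    exact ⟨hs, summable_geometric_two.of_nonneg_of_le
      (fun _ => tsum_nonneg fun _ => by positivity) fun m => (hlt m).le⟩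
  -- a cover of weight `< 2⁻ᴹ` only uses lengths `ℓ` with `h ℓ > M ≥ h 0, …, h L`
  set M := (Finset.range (L + 1)).sup h
  obtain ⟨k, hk⟩ := mem_iUnion.1 (hcov M hx)
  refine ⟨(M, k), ?_, hk⟩
  by_contra! hle
  have hM : h (σ M k).length ≤ M := Finset.le_sup (Finset.mem_range.2 (Nat.lt_succ_of_le hle))
  have hsmall : 1 / (h (σ M k).length : ℝ) < (1 / 2) ^ M :=
    ((hs M).le_tsum k fun _ _ => by positivity).trans_lt (hlt M)
  have hlarge : (1 / 2 : ℝ) ^ M ≤ 1 / (h (σ M k).length : ℝ) := by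
    rw [one_div_pow]
    exact one_div_le_one_div_of_le (by exact_mod_cast h1 _)
      (by exact_mod_cast hM.trans Nat.lt_two_pow_self.le)
  exact hlarge.not_gt hsmall

lemma fN.exists_summable_levels {h : ℕ → ℕ} (h1 : ∀ n, 1 ≤ h n) {F : Set (ℕ → ℕ)}
    (hF : fN h F) :
    ∃ S : (n : ℕ) → Set (Fin n → ℕ), (∀ n, (S n).Finite) ∧
      Summable (fun n => ((S n).ncard : ℝ) / (h n : ℝ)) ∧
      F ⊆ {x | ∃ᶠ n in atTop, (fun i : Fin n => x i) ∈ S n} := by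
  obtain ⟨σ, hs, hlong⟩ := hF.exists_summable_cover_long h1
  let g : ℕ × ℕ → ℕ := fun p => (σ p).length
  have hv : ∀ n, 0 < 1 / (h n : ℝ) := fun n => one_div_pos.2 (by exact_mod_cast h1 n)
  have hfin : ∀ n, (g ⁻¹' {n}).Finite := finite_preimage_singleton_of_summable hv hs
  let S : (n : ℕ) → Set (Fin n → ℕ) := fun n => List.ofFn ⁻¹' (σ '' (g ⁻¹' {n}))
  have hS : ∀ n, (S n).ncard ≤ (g ⁻¹' {n}).ncard := fun n =>
    (ncard_le_ncard_of_injOn List.ofFn (fun _ hf => hf) List.ofFn_injective.injOn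
      ((hfin n).image σ)).trans (ncard_image_le (hfin n))
  refine ⟨S, fun n => ((hfin n).image σ).preimage List.ofFn_injective.injOn, ?_, ?_⟩
  · refine (summable_ncard_preimage_singleton_mul (fun n => (hv n).le) hs).of_nonneg_of_le
      (fun _ => by positivity) fun n => ?_
    rw [div_eq_mul_one_div]
    gcongr
    exact hS n
  · intro x hx
    refine frequently_atTop.2 fun L => ?_
    obtain ⟨p, hLp, hxp⟩ := hlong x hx L
    exact ⟨_, hLp.le, p, rfl, (ofFn_eq_of_mem_cylinder hxp).symm⟩

lemma fN_of_summable_levels {h : ℕ → ℕ} (hlim : LimsupInfty h) {F : Set (ℕ → ℕ)}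
    (S : (n : ℕ) → Set (Fin n → ℕ)) (hfin : ∀ n, (S n).Finite)
    (hsum : Summable (fun n => ((S n).ncard : ℝ) / (h n : ℝ)))
    (hcov : F ⊆ {x | ∃ᶠ n in atTop, (fun i : Fin n => x i) ∈ S n}) :
    fN h F := by
  intro ε hε
  obtain ⟨N, hN⟩ := ((tendsto_sum_nat_add fun n => ((S n).ncard : ℝ) / (h n : ℝ)).eventually_lt_const
    hε).exists
  let σ : (Σ n, S (n + N)) → List ℕ := fun f => List.ofFn f.2.1
  let w : (Σ n, S (n + N)) → ℝ := fun f => 1 / (h (σ f).length : ℝ)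
  have hlevel : ∀ n, ∑' f : S (n + N), w ⟨n, f⟩ = ((S (n + N)).ncard : ℝ) / (h (n + N) : ℝ) := by
    intro n
    simp only [w, σ, List.length_ofFn]
    rw [tsum_const, nsmul_eq_mul, Nat.card_coe_set_eq, mul_one_div]
  have hw : Summable w := by
    have := fun n => (hfin (n + N)).to_subtype
    refine (summable_sigma_of_nonneg fun _ => one_div_nonneg.2 (Nat.cast_nonneg _)).2
      ⟨fun n => .of_finite, ?_⟩
    exact ((summable_nat_add_iff N).2 hsum).congr fun n => (hlevel n).symm
  have hw_lt : ∑' f, w f < ε := by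
    have := fun n => (hfin (n + N)).to_subtype
    rwa [hw.tsum_sigma' fun n => .of_finite, tsum_congr hlevel]
  obtain ⟨τ, hτs, hτlt, hστ⟩ := exists_nat_cover_of_countable hlim σ hw hw_lt
  refine ⟨τ, hτs, hτlt, fun x hx => hστ ?_⟩
  obtain ⟨n, hn, hxn⟩ := frequently_atTop.1 (hcov hx) N
  obtain ⟨k, rfl⟩ := Nat.exists_eq_add_of_le' hn
  exact mem_iUnion.2 ⟨⟨k, _, hxn⟩, mem_cylinder_ofFn x _⟩

theorem stmt0 (h : ℕ → ℕ) (h1 : ∀ n, 1 ≤ h n) (hlim : LimsupInfty h) (F : Set (ℕ → ℕ)) :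
    fN h F ↔
      ∃ S : (n : ℕ) → Set (Fin n → ℕ),
        (∀ n, (S n).Finite) ∧
        Summable (fun n => ((S n).ncard : ℝ) / (h n : ℝ)) ∧
        F ⊆ {x | ∃ᶠ n in Filter.atTop, (fun i : Fin n => x i) ∈ S n} :=
  ⟨fun hF => hF.exists_summable_levels h1,
    fun ⟨S, hfin, hsum, hcov⟩ => fN_of_summable_levels hlim S hfin hsum hcov⟩
end

section
/- Let h : ℕ → ℕ satisfy h(n) ≥ 1 for all n, limsup_n h(n) = ∞, and h(a+b) ≥ h(a)·h(b) for all a, b ∈ ℕ, and let c ∈ (0,1). Then for every F ⊆ ω^ω: F ∈ fE(h) if and only if there are a partition of ℕ into consecutive nonempty finite intervals (I_n)_{n∈ℕ} and sets J_n ⊆ ω^{I_n} with |J_n|/h(|I_n|) < c for every n such that F ⊆ {x ∈ ω^ω : x↾I_n ∈ J_n for all but finitely many n}. -/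
open Filter Set

/-! Merging consecutive intervals of a partition into blocks, and taking as patterns on a block
those whose restriction to every interval is an allowed pattern there, preserves the eventual
covering; since `h` is supermultiplicative, the ratio `|K|/h(|I|)` of a block is at most the
product of the ratios of its intervals. -/

lemma restrIco_restrIco {x : ℕ → ℕ} {L U l u : ℕ} (hL : L ≤ l) (hU : u ≤ U) :
    restrIco (restrIco x L U) l u = restrIco x l u := by
  funext i
  by_cases hi : l ≤ i ∧ i < u
  · have hI : L ≤ i ∧ i < U := ⟨hL.trans hi.1, hi.2.trans_le hU⟩
    simp [restrIco, hi, hI]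
  · simp [restrIco, hi]

lemma Monotone.exists_mem_Ico_of_mem_Ico {a : ℕ → ℕ} (ha : Monotone a) {p j : ℕ} :
    ∀ {q : ℕ}, a p ≤ j → j < a q → ∃ i ∈ Finset.Ico p q, a i ≤ j ∧ j < a (i + 1)
  | 0, hp, hq => absurd (hp.trans_lt hq) (not_lt.mpr (ha (Nat.zero_le p)))
  | q + 1, hp, hq => by
    by_cases hj : j < a q
    · obtain ⟨i, hi, hij⟩ := ha.exists_mem_Ico_of_mem_Ico hp hj
      exact ⟨i, Finset.Ico_subset_Ico_right q.le_succ hi, hij⟩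
    · have hpq : p ≤ q := by
        by_contra! hqp
        exact absurd (hp.trans_lt hq) (not_lt.mpr (ha hqp))
      exact ⟨q, Finset.mem_Ico.mpr ⟨hpq, q.lt_succ_self⟩, not_lt.mp hj, hq⟩

lemma prod_Ico_le_sub_of_supermul (h : ℕ → ℕ) (h0 : 1 ≤ h 0)
    (hsm : ∀ m n, h m * h n ≤ h (m + n)) {a : ℕ → ℕ} (ha : Monotone a) {p q : ℕ}
    (hpq : p ≤ q) : ∏ i ∈ Finset.Ico p q, h (a (i + 1) - a i) ≤ h (a q - a p) := by
  induction q, hpq using Nat.le_induction with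
  | base => simpa using h0
  | succ q hpq ih =>
    rw [Finset.prod_Ico_succ_top hpq]
    calc _ ≤ h (a q - a p) * h (a (q + 1) - a q) := Nat.mul_le_mul_right _ ih
      _ ≤ h (a q - a p + (a (q + 1) - a q)) := hsm _ _
      _ = h (a (q + 1) - a p) := by
        have := ha hpq
        have := ha (by omega : q ≤ q + 1)
        congr 1
        omega

def blockPatterns (a : ℕ → ℕ) (J : ℕ → Set (ℕ → ℕ)) (p q : ℕ) : Set (ℕ → ℕ) :=
  {σ | (∀ i, ¬ (a p ≤ i ∧ i < a q) → σ i = 0) ∧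
    ∀ i ∈ Finset.Ico p q, restrIco σ (a i) (a (i + 1)) ∈ J i}

section blockPatterns

variable {a : ℕ → ℕ} {J : ℕ → Set (ℕ → ℕ)}

lemma suppIco_blockPatterns (p q : ℕ) : SuppIco (a p) (a q) (blockPatterns a J p q) :=
  fun _ hσ => hσ.1

def blockPatterns.pieces (a : ℕ → ℕ) (J : ℕ → Set (ℕ → ℕ)) (p q : ℕ) :
    blockPatterns a J p q → (i : Finset.Ico p q) → J i :=
  fun σ i => ⟨restrIco σ.1 (a i) (a (i + 1)), σ.2.2 i i.2⟩

lemma blockPatterns.pieces_injective (ha : Monotone a) (p q : ℕ) :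
    Function.Injective (blockPatterns.pieces a J p q) := by
  rintro ⟨σ, hσ⟩ ⟨τ, hτ⟩ hστ
  refine Subtype.ext (funext fun j => show σ j = τ j from ?_)
  by_cases hj : a p ≤ j ∧ j < a q
  · obtain ⟨i, hi, hij⟩ := ha.exists_mem_Ico_of_mem_Ico hj.1 hj.2
    have := congrFun (congrArg Subtype.val (congrFun hστ ⟨i, hi⟩)) j
    simpa [blockPatterns.pieces, restrIco, hij] using this
  · rw [hσ.1 j hj, hτ.1 j hj]

lemma blockPatterns_finite (ha : Monotone a) (hJ : ∀ n, (J n).Finite) (p q : ℕ) :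
    (blockPatterns a J p q).Finite := by
  have := fun i => (hJ i).to_subtype
  exact Set.finite_coe_iff.mp (Finite.of_injective _ (blockPatterns.pieces_injective ha p q))

lemma ncard_blockPatterns_le (ha : Monotone a) (hJ : ∀ n, (J n).Finite) (p q : ℕ) :
    (blockPatterns a J p q).ncard ≤ ∏ i ∈ Finset.Ico p q, (J i).ncard := by
  have := fun i => (hJ i).to_subtype
  rw [← Nat.card_coe_set_eq, ← Finset.prod_coe_sort]
  simpa only [Nat.card_pi, Nat.card_coe_set_eq] using
    Nat.card_le_card_of_injective _ (blockPatterns.pieces_injective ha p q)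

end blockPatterns

lemma ncard_blockPatterns_div_le (h : ℕ → ℕ) (h1 : ∀ n, 1 ≤ h n)
    (hsm : ∀ m n, h m * h n ≤ h (m + n)) {a : ℕ → ℕ} (ha : Monotone a)
    {J : ℕ → Set (ℕ → ℕ)} (hJ : ∀ n, (J n).Finite) {p q : ℕ} (hpq : p ≤ q) :
    ((blockPatterns a J p q).ncard : ℝ) / h (a q - a p) ≤
      ∏ i ∈ Finset.Ico p q, ((J i).ncard : ℝ) / h (a (i + 1) - a i) := by
  rw [Finset.prod_div_distrib]
  have hpos : (0 : ℝ) < ∏ i ∈ Finset.Ico p q, (h (a (i + 1) - a i) : ℝ) := by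
    exact_mod_cast Finset.prod_pos fun i _ => h1 _
  gcongr
  · exact_mod_cast ncard_blockPatterns_le ha hJ p q
  · exact_mod_cast prod_Ico_le_sub_of_supermul h (h1 0) hsm ha hpq

lemma eventually_restrIco_mem_blockPatterns {a : ℕ → ℕ} (ha : Monotone a)
    {J : ℕ → Set (ℕ → ℕ)} {b : ℕ → ℕ} (hb : StrictMono b) {x : ℕ → ℕ}
    (hx : ∀ᶠ i in atTop, restrIco x (a i) (a (i + 1)) ∈ J i) :
    ∀ᶠ n in atTop, restrIco x (a (b n)) (a (b (n + 1))) ∈ blockPatterns a J (b n) (b (n + 1)) := by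
  obtain ⟨N, hN⟩ := eventually_atTop.mp hx
  filter_upwards [eventually_ge_atTop N] with n hn
  refine ⟨fun i hi => by simp [restrIco, hi], fun i hi => ?_⟩
  obtain ⟨hni, hin⟩ := Finset.mem_Ico.mp hi
  rw [restrIco_restrIco (ha hni) (ha hin)]
  exact hN i (hn.trans (hb.le_apply.trans hni))

lemma exists_coarsening (h : ℕ → ℕ) (h1 : ∀ n, 1 ≤ h n)
    (hsm : ∀ m n, h m * h n ≤ h (m + n)) {a : ℕ → ℕ} (ha : Monotone a)
    {J : ℕ → Set (ℕ → ℕ)} (hJ : ∀ n, (J n).Finite) {F : Set (ℕ → ℕ)}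
    (hF : F ⊆ {x | ∀ᶠ n in atTop, restrIco x (a n) (a (n + 1)) ∈ J n})
    {b : ℕ → ℕ} (hb : StrictMono b) :
    ∃ K : ℕ → Set (ℕ → ℕ),
      (∀ n, SuppIco (a (b n)) (a (b (n + 1))) (K n)) ∧
      (∀ n, (K n).Finite) ∧
      (∀ n, ((K n).ncard : ℝ) / h (a (b (n + 1)) - a (b n)) ≤
        ∏ i ∈ Finset.Ico (b n) (b (n + 1)), ((J i).ncard : ℝ) / h (a (i + 1) - a i)) ∧
      F ⊆ {x | ∀ᶠ n in atTop, restrIco x (a (b n)) (a (b (n + 1))) ∈ K n} :=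
  ⟨fun n => blockPatterns a J (b n) (b (n + 1)), fun _ => suppIco_blockPatterns _ _,
    fun _ => blockPatterns_finite ha hJ _ _,
    fun n => ncard_blockPatterns_div_le h h1 hsm ha hJ (hb.monotone n.le_succ),
    fun _ hx => eventually_restrIco_mem_blockPatterns ha hb (hF hx)⟩

lemma prod_Ico_le_pow {r : ℕ → ℝ} {c : ℝ} {p q : ℕ} (hr : ∀ i ∈ Finset.Ico p q, 0 ≤ r i)
    (hrc : ∀ i ∈ Finset.Ico p q, r i ≤ c) : ∏ i ∈ Finset.Ico p q, r i ≤ c ^ (q - p) := by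
  calc ∏ i ∈ Finset.Ico p q, r i ≤ ∏ _i ∈ Finset.Ico p q, c := Finset.prod_le_prod hr hrc
    _ = c ^ (q - p) := by rw [Finset.prod_const, Nat.card_Ico]

lemma tendsto_prod_range_zero_of_eventually_le {r : ℕ → ℝ} (hr : ∀ i, 0 ≤ r i) {c : ℝ}
    (hc0 : 0 ≤ c) (hc1 : c < 1) (hrc : ∀ᶠ i in atTop, r i ≤ c) :
    Tendsto (fun m => ∏ i ∈ Finset.range m, r i) atTop (nhds 0) := by
  obtain ⟨N, hN⟩ := eventually_atTop.mp hrc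
  have hgeom : Tendsto (fun m => (∏ i ∈ Finset.range N, r i) * c ^ (m - N)) atTop (nhds 0) := by
    simpa using ((tendsto_pow_atTop_nhds_zero_of_lt_one hc0 hc1).comp
      (tendsto_sub_atTop_nat N)).const_mul (∏ i ∈ Finset.range N, r i)
  refine squeeze_zero' (Eventually.of_forall fun m => Finset.prod_nonneg fun i _ => hr i) ?_ hgeom
  filter_upwards [eventually_ge_atTop N] with m hm
  rw [← Finset.prod_range_mul_prod_Ico r hm]
  gcongr
  · exact Finset.prod_nonneg fun i _ => hr i
  · exact prod_Ico_le_pow (fun i _ => hr i) fun i hi => hN i (Finset.mem_Ico.mp hi).1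

def fEUniform (h : ℕ → ℕ) (c : ℝ) (F : Set (ℕ → ℕ)) : Prop :=
  ∃ a : ℕ → ℕ, a 0 = 0 ∧ StrictMono a ∧
    ∃ J : ℕ → Set (ℕ → ℕ),
      (∀ n, SuppIco (a n) (a (n+1)) (J n)) ∧
      (∀ n, (J n).Finite) ∧
      (∀ n, ((J n).ncard : ℝ) / (h (a (n+1) - a n) : ℝ) < c) ∧
      F ⊆ {x | ∀ᶠ n in Filter.atTop, restrIco x (a n) (a (n+1)) ∈ J n}

/-- The ratios tend to `0`, so all but the first `M` are below `c`; the first `M` intervals are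
merged into one block, whose ratio is at most the product of theirs. -/
theorem fE.fEUniform {h : ℕ → ℕ} (h1 : ∀ n, 1 ≤ h n)
    (hsm : ∀ m n, h m * h n ≤ h (m + n)) {c : ℝ} (hc0 : 0 < c) (hc1 : c < 1) {F : Set (ℕ → ℕ)}
    (hF : fE h F) : fEUniform h c F := by
  obtain ⟨a, ha0, ha, J, -, hJ, hsum, hF⟩ := hF
  set r : ℕ → ℝ := fun i => ((J i).ncard : ℝ) / h (a (i + 1) - a i)
  have hr : ∀ i, 0 ≤ r i := fun i => by positivity
  have hsmall : ∀ᶠ i in atTop, r i < c := hsum.tendsto_atTop_zero.eventually (gt_mem_nhds hc0)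
  have hprod :=
    tendsto_prod_range_zero_of_eventually_le hr hc0.le hc1 (hsmall.mono fun _ => le_of_lt)
  obtain ⟨M, hM1, hMprod, hMtail⟩ := ((eventually_ge_atTop 1).and
    ((hprod.eventually (gt_mem_nhds hc0)).and (eventually_forall_ge_atTop.mpr hsmall))).exists
  set b : ℕ → ℕ := fun n => if n = 0 then 0 else M + n - 1
  have hb : StrictMono b := strictMono_nat_of_lt_succ fun n => by
    rcases n with _ | n <;> simp [b]; omega
  obtain ⟨K, hKsupp, hK, hKratio, hFK⟩ := exists_coarsening h h1 hsm ha.monotone hJ hF hb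
  refine ⟨a ∘ b, by simpa [b] using ha0, ha.comp hb, K, hKsupp, hK,
    fun n => (hKratio n).trans_lt ?_, hFK⟩
  rcases n with _ | n
  · have hIco : Finset.Ico (b 0) (b (0 + 1)) = Finset.range M := by simp [b]
    rwa [hIco]
  · have hIco : Finset.Ico (b (n + 1)) (b (n + 1 + 1)) = {M + n} := by
      simp only [b]; rw [if_neg n.succ_ne_zero, if_neg (n + 1).succ_ne_zero]
      convert Nat.Ico_succ_singleton (M + n) using 2 <;> omega
    rw [hIco, Finset.prod_singleton]
    exact hMtail (M + n) (by omega)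

/-- The block `[a (n ^ 2), a ((n + 1) ^ 2))` consists of `2 n + 1` intervals, so its ratio is at
most `c ^ (2 n + 1) ≤ c ^ n`. -/
theorem fEUniform.fE {h : ℕ → ℕ} (h1 : ∀ n, 1 ≤ h n)
    (hsm : ∀ m n, h m * h n ≤ h (m + n)) {c : ℝ} (hc0 : 0 < c) (hc1 : c < 1) {F : Set (ℕ → ℕ)}
    (hF : fEUniform h c F) : fE h F := by
  obtain ⟨a, ha0, ha, J, -, hJ, hratio, hF⟩ := hF
  have hb : StrictMono fun n : ℕ => n ^ 2 := Nat.pow_left_strictMono two_ne_zero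
  obtain ⟨K, hKsupp, hK, hKratio, hFK⟩ := exists_coarsening h h1 hsm ha.monotone hJ hF hb
  refine ⟨fun n => a (n ^ 2), by simpa using ha0, ha.comp hb, K, hKsupp, hK, ?_, hFK⟩
  refine Summable.of_nonneg_of_le (fun n => by positivity) (fun n => ?_)
    (summable_geometric_of_lt_one hc0.le hc1)
  calc _ ≤ _ := hKratio n
    _ ≤ c ^ ((n + 1) ^ 2 - n ^ 2) :=
      prod_Ico_le_pow (fun i _ => by positivity) fun i _ => (hratio i).le
    _ ≤ c ^ n := pow_le_pow_of_le_one hc0.le hc1.le (by rw [add_sq]; omega)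

theorem stmt1_general (h : ℕ → ℕ) (h1 : ∀ n, 1 ≤ h n)
    (hsm : ∀ a b : ℕ, h a * h b ≤ h (a + b)) (c : ℝ) (hc0 : 0 < c) (hc1 : c < 1)
    (F : Set (ℕ → ℕ)) :
    fE h F ↔
      ∃ a : ℕ → ℕ, a 0 = 0 ∧ StrictMono a ∧
        ∃ J : ℕ → Set (ℕ → ℕ),
          (∀ n, SuppIco (a n) (a (n+1)) (J n)) ∧
          (∀ n, (J n).Finite) ∧
          (∀ n, ((J n).ncard : ℝ) / (h (a (n+1) - a n) : ℝ) < c) ∧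
          F ⊆ {x | ∀ᶠ n in Filter.atTop, restrIco x (a n) (a (n+1)) ∈ J n} :=
  ⟨fE.fEUniform h1 hsm hc0 hc1, fEUniform.fE h1 hsm hc0 hc1⟩

theorem stmt1 (h : ℕ → ℕ) (h1 : ∀ n, 1 ≤ h n) (hlim : LimsupInfty h)
    (hsm : ∀ a b : ℕ, h a * h b ≤ h (a + b)) (c : ℝ) (hc0 : 0 < c) (hc1 : c < 1)
    (F : Set (ℕ → ℕ)) :
    fE h F ↔
      ∃ a : ℕ → ℕ, a 0 = 0 ∧ StrictMono a ∧
        ∃ J : ℕ → Set (ℕ → ℕ),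
          (∀ n, SuppIco (a n) (a (n+1)) (J n)) ∧
          (∀ n, (J n).Finite) ∧
          (∀ n, ((J n).ncard : ℝ) / (h (a (n+1) - a n) : ℝ) < c) ∧
          F ⊆ {x | ∀ᶠ n in Filter.atTop, restrIco x (a n) (a (n+1)) ∈ J n} :=
  stmt1_general h h1 hsm c hc0 hc1 F
end

section
/- A set F ⊆ ω^ω belongs to fE(Fin) if and only if F is contained in a σ-compact subset of ω^ω; moreover, fE(Fin) ⊆ fN(Fin). -/
open Filter Set

lemma continuous_restrIco (l u : ℕ) : Continuous fun x : ℕ → ℕ => restrIco x l u := by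
  apply continuous_pi
  intro i
  unfold restrIco
  by_cases h : l ≤ i ∧ i < u
  · simpa [h] using continuous_apply i
  · simpa [h] using continuous_const

lemma fEFin_of_sigmaCompact {F K : Set (ℕ → ℕ)} (hK : IsSigmaCompact K) (hFK : F ⊆ K) :
    fEFin F := by
  obtain ⟨C, hC, hCK⟩ := hK
  set f : ℕ → ℕ → ℕ := fun m i => sSup ((fun x => x i) '' C m) with hf
  have hfb : ∀ m i x, x ∈ C m → x i ≤ f m i := by
    intro m i x hx
    exact le_csSup (((hC m).image (continuous_apply i)).finite_of_discrete).bddAbove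
      ⟨x, hx, rfl⟩
  set g : ℕ → ℕ := fun n => (Finset.range (n+1)).sup (fun m => f m n) with hg
  refine ⟨id, rfl, strictMono_id, fun n => {σ | σ n ≤ g n ∧ ∀ i, i ≠ n → σ i = 0}, ?_, ?_, ?_⟩
  · intro n σ hσ i hi
    exact hσ.2 i (by rintro rfl; exact hi ⟨le_refl _, Nat.lt_succ_self _⟩)
  · intro n
    refine ((Set.finite_Iic (g n)).image (fun v : ℕ => fun i => if i = n then v else 0)).subset ?_
    intro σ hσ
    refine ⟨σ n, hσ.1, funext fun i => ?_⟩
    by_cases h : i = n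
    · simp [h]
    · simp [h, hσ.2 i h]
  · intro x hx
    obtain ⟨m, hm⟩ : ∃ m, x ∈ C m := by
      have h1 := hFK hx; rw [← hCK] at h1; exact Set.mem_iUnion.mp h1
    rw [Set.mem_setOf_eq, Filter.eventually_atTop]
    refine ⟨m, fun n hn => ?_⟩
    constructor
    · have h1 : restrIco x (id n) (id (n+1)) n = x n := by
        simp [restrIco]
      rw [h1]
      exact le_trans (hfb m n x hm)
        (Finset.le_sup (f := fun m => f m n) (Finset.mem_range.mpr (Nat.lt_succ_of_le hn)))
    · intro i hi
      show restrIco x (id n) (id (n+1)) i = 0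
      simp only [restrIco, id_eq]
      rw [if_neg (by omega)]

lemma sigmaCompact_of_fEFin {F : Set (ℕ → ℕ)} (hF : fEFin F) :
    ∃ K, IsSigmaCompact K ∧ F ⊆ K := by
  obtain ⟨a, ha0, hamono, J, hsupp, hfin, hFsub⟩ := hF
  have hex : ∀ m i, a m ≤ i → ∃ n, m ≤ n ∧ a n ≤ i ∧ i < a (n+1) := by
    intro m i hmi
    set n := Nat.findGreatest (fun j => a j ≤ i) i with hn
    have hm_le : m ≤ i := le_trans hamono.le_apply hmi
    have h1 : a n ≤ i := Nat.findGreatest_spec (P := fun j => a j ≤ i) hm_le hmi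
    have h2 : i < a (n+1) := by
      by_contra h
      push_neg at h
      have h3 : n + 1 ≤ i := le_trans hamono.le_apply h
      exact Nat.findGreatest_is_greatest (P := fun j => a j ≤ i) (Nat.lt_succ_self n) h3 h
    have h4 : m < n + 1 := hamono.lt_iff_lt.mp (lt_of_le_of_lt hmi h2)
    exact ⟨n, Nat.lt_succ_iff.mp h4, h1, h2⟩
  set T : ℕ → Set ℕ := fun i => ⋃ n ∈ Set.Iic i, (fun σ : ℕ → ℕ => σ i) '' J n with hT
  have hTfin : ∀ i, (T i).Finite := fun i =>
    Set.Finite.biUnion (Set.finite_Iic i) (fun n _ => (hfin n).image _)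
  set c : ℕ → ℕ := fun i => sSup (T i) with hc
  set C : ℕ × ℕ → Set (ℕ → ℕ) := fun p =>
    {x | (∀ i < a p.1, x i ≤ p.2) ∧ ∀ n, p.1 ≤ n → restrIco x (a n) (a (n+1)) ∈ J n} with hCdef
  refine ⟨⋃ p, C p, isSigmaCompact_iUnion_of_isCompact _ ?_, ?_⟩
  · rintro ⟨m, k⟩
    have hsub : C (m, k) ⊆ Set.pi Set.univ (fun i => Set.Iic (max k (c i))) := by
      intro x hx i _
      by_cases hi : i < a m
      · exact le_trans (hx.1 i hi) (le_max_left _ _)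
      · push_neg at hi
        obtain ⟨n, hmn, h1, h2⟩ := hex m i hi
        have hmem : x i ∈ T i := by
          refine Set.mem_biUnion (show n ∈ Set.Iic i from le_trans hamono.le_apply h1) ?_
          refine ⟨restrIco x (a n) (a (n+1)), hx.2 n hmn, ?_⟩
          simp [restrIco, h1, h2]
        exact le_trans (le_csSup (hTfin i).bddAbove hmem) (le_max_right _ _)
    refine IsCompact.of_isClosed_subset
      (isCompact_univ_pi fun i => (Set.finite_Iic _).isCompact) ?_ hsub
    have heq : C (m, k) = (⋂ i ∈ {i | i < a m}, (fun x : ℕ → ℕ => x i) ⁻¹' Set.Iic k) ∩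
        ⋂ n ∈ {n | m ≤ n}, (fun x => restrIco x (a n) (a (n+1))) ⁻¹' (J n) := by
      ext x
      simp only [hCdef, Set.mem_setOf_eq, Set.mem_inter_iff, Set.mem_iInter, Set.mem_preimage,
        Set.mem_Iic]
    rw [heq]
    refine IsClosed.inter (isClosed_biInter fun i _ => ?_) (isClosed_biInter fun n _ => ?_)
    · exact (isClosed_discrete _).preimage (continuous_apply i)
    · exact ((hfin n).isClosed).preimage (continuous_restrIco _ _)
  · intro x hx
    obtain ⟨m, hm⟩ := Filter.eventually_atTop.mp (hFsub hx)
    exact Set.mem_iUnion.mpr ⟨(m, (Finset.range (a m)).sup x),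
      fun i hi => Finset.le_sup (Finset.mem_range.mpr hi), fun n hn => hm n hn⟩

lemma fNFin_of_sigmaCompact {F K : Set (ℕ → ℕ)} (hK : IsSigmaCompact K) (hFK : F ⊆ K) :
    fNFin F := by
  obtain ⟨C, hC, hCK⟩ := hK
  refine ⟨fun n => ⋃ m ∈ Set.Iic n, (fun x : ℕ → ℕ => fun i : Fin n => x i) '' C m, ?_, ?_⟩
  · intro n
    exact Set.Finite.biUnion (Set.finite_Iic n) fun m _ =>
      ((hC m).image (continuous_pi fun i => continuous_apply _)).finite_of_discrete
  · intro x hx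
    obtain ⟨m, hm⟩ : ∃ m, x ∈ C m := by
      have h1 := hFK hx; rw [← hCK] at h1; exact Set.mem_iUnion.mp h1
    rw [Set.mem_setOf_eq, Filter.frequently_atTop]
    intro N
    exact ⟨max N m, le_max_left _ _, Set.mem_biUnion (le_max_right N m) ⟨x, hm, rfl⟩⟩

theorem stmt2 :
    (∀ F : Set (ℕ → ℕ), fEFin F ↔ ∃ K : Set (ℕ → ℕ), IsSigmaCompact K ∧ F ⊆ K) ∧
    (∀ F : Set (ℕ → ℕ), fEFin F → fNFin F) := by
  constructor
  · intro F
    exact ⟨sigmaCompact_of_fEFin, fun ⟨K, hK, hFK⟩ => fEFin_of_sigmaCompact hK hFK⟩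
  · intro F hF
    obtain ⟨K, hK, hFK⟩ := sigmaCompact_of_fEFin hF
    exact fNFin_of_sigmaCompact hK hFK
end

section
/- fN(Fin) ⊆ fS(Fin), and both fN(Fin) and fS(Fin) are σ-ideals on ω^ω, i.e., each is closed under taking subsets and countable unions. -/
open Filter Set

/-!
Both families are instances of one scheme: `F` is covered by the points `x` such that
the `n`-th observation `f x n` lies in a prescribed finite set `S n` for infinitely many `n`.
Such families are σ-ideals because countably many witnesses `S k` can be merged into the single
finite witness `n ↦ ⋃ k ≤ n, S k n`: from index `k` on it contains `S k n`.
For `fS(Fin)` one may take `f x n = x n` (singleton intervals), since a finite pattern set on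
`[a n, a (n+1))` is caught by finitely many values at the coordinate `a n ≥ n`; and `fN(Fin)` reduces
to this form by reading off the last coordinate of `x↾(n+1)`.
-/

def FrequentlyInFinite {α : Type*} {β : ℕ → Type*} (f : α → (n : ℕ) → β n) (F : Set α) : Prop :=
  ∃ S : (n : ℕ) → Set (β n), (∀ n, (S n).Finite) ∧ F ⊆ {x | ∃ᶠ n in atTop, f x n ∈ S n}

namespace FrequentlyInFinite

variable {α : Type*} {β : ℕ → Type*} {f : α → (n : ℕ) → β n}

theorem mono {A B : Set α} (hAB : A ⊆ B) (hB : FrequentlyInFinite f B) :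
    FrequentlyInFinite f A :=
  let ⟨S, hfin, hsub⟩ := hB
  ⟨S, hfin, hAB.trans hsub⟩

theorem iUnion {G : ℕ → Set α} (hG : ∀ k, FrequentlyInFinite f (G k)) :
    FrequentlyInFinite f (⋃ k, G k) := by
  choose S hfin hsub using hG
  refine ⟨fun n => ⋃ k ∈ Iic n, S k n, fun n => (finite_Iic n).biUnion fun k _ => hfin k n, ?_⟩
  rintro x ⟨_, ⟨k, rfl⟩, hk⟩
  exact ((hsub k hk).and_eventually (eventually_ge_atTop k)).mono
    fun n ⟨hn, hkn⟩ => mem_biUnion hkn hn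

end FrequentlyInFinite

theorem fNFin_iff {F : Set (ℕ → ℕ)} :
    fNFin F ↔ FrequentlyInFinite (fun x n (i : Fin n) => x i) F :=
  Iff.rfl

theorem FrequentlyInFinite.of_fNFin {F : Set (ℕ → ℕ)} (hF : fNFin F) :
    FrequentlyInFinite (fun x n => x n) F := by
  obtain ⟨S, hfin, hsub⟩ := hF
  refine ⟨fun n => (fun σ => σ (Fin.last n)) '' S (n + 1), fun n => (hfin _).image _, ?_⟩
  intro x hx
  have hx' := hsub hx
  rw [mem_ofPred_eq, ← map_add_atTop_eq_nat 1, frequently_map] at hx'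
  exact hx'.mono fun n hn => ⟨_, hn, rfl⟩

theorem restrIco_succ (x : ℕ → ℕ) (n : ℕ) : restrIco x n (n + 1) = Pi.single n (x n) := by
  funext i
  rcases eq_or_ne i n with rfl | hi
  · simp [restrIco]
  · rw [Pi.single_eq_of_ne hi, restrIco, if_neg (by omega)]

theorem fSFin_of_frequentlyInFinite {F : Set (ℕ → ℕ)}
    (hF : FrequentlyInFinite (fun x n => x n) F) : fSFin F := by
  obtain ⟨V, hfin, hsub⟩ := hF
  refine ⟨id, rfl, strictMono_id, fun n => Pi.single n '' V n, ?_, fun n => (hfin n).image _, ?_⟩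
  · rintro n _ ⟨v, -, rfl⟩ i hi
    rw [Pi.single_apply, if_neg]
    rintro rfl
    exact hi ⟨le_rfl, Nat.lt_succ_self i⟩
  · intro x hx
    refine (hsub hx).mono fun n hn => ?_
    show restrIco x n (n + 1) ∈ Pi.single n '' V n
    exact restrIco_succ x n ▸ mem_image_of_mem _ hn

theorem FrequentlyInFinite.of_fSFin {F : Set (ℕ → ℕ)} (hF : fSFin F) :
    FrequentlyInFinite (fun x n => x n) F := by
  obtain ⟨a, -, ha, J, -, hfin, hsub⟩ := hF
  refine ⟨fun i => ⋃ n ∈ Iic i, (fun σ => σ i) '' J n,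
    fun i => (finite_Iic i).biUnion fun n _ => (hfin n).image _, ?_⟩
  intro x hx
  refine ha.tendsto_atTop.frequently_map _ (fun n hn => ?_) (hsub hx)
  refine mem_biUnion (show n ≤ a n from ha.le_apply) ⟨restrIco x (a n) (a (n + 1)), hn, ?_⟩
  simp [restrIco, ha (Nat.lt_succ_self n)]

theorem fSFin_iff {F : Set (ℕ → ℕ)} : fSFin F ↔ FrequentlyInFinite (fun x n => x n) F :=
  ⟨.of_fSFin, fSFin_of_frequentlyInFinite⟩

theorem stmt3 :
    (∀ F : Set (ℕ → ℕ), fNFin F → fSFin F) ∧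
    (∀ A B : Set (ℕ → ℕ), A ⊆ B → fNFin B → fNFin A) ∧
    (∀ G : ℕ → Set (ℕ → ℕ), (∀ n, fNFin (G n)) → fNFin (⋃ n, G n)) ∧
    (∀ A B : Set (ℕ → ℕ), A ⊆ B → fSFin B → fSFin A) ∧
    (∀ G : ℕ → Set (ℕ → ℕ), (∀ n, fSFin (G n)) → fSFin (⋃ n, G n)) := by
  simp only [fSFin_iff, fNFin_iff]
  exact ⟨fun _ => .of_fNFin, fun A B => .mono, fun G => .iUnion,
    fun A B => .mono, fun G => .iUnion⟩
end

section
/- Let h : ℕ → ℕ satisfy h(n) ≥ 1 for all n and limsup_n h(n) = ∞. Then there exists a comeager set F ⊆ ω^ω with F ∈ fN(h); in particular, fN(h) is orthogonal to the ideal of meager subsets of ω^ω (i.e., ω^ω is the union of a set in fN(h) and a meager set). -/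
open Filter Set

lemma isOpen_cylinder (σ : List ℕ) : IsOpen (cylinder σ) := by
  have : cylinder σ = ⋂ i : Fin σ.length, (fun x : ℕ → ℕ => x i) ⁻¹' {σ.get i} := by
    ext x; simp [cylinder]
  rw [this]
  exact isOpen_iInter_of_finite fun i =>
    (isOpen_discrete _).preimage (continuous_apply (i : ℕ))

lemma cylinder_anti {τ σ : List ℕ} (hp : τ <+: σ) : cylinder σ ⊆ cylinder τ := by
  intro x hx i
  have hi : (i : ℕ) < σ.length := lt_of_lt_of_le i.isLt hp.length_le
  have h2 := hx ⟨i, hi⟩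
  simpa [List.get_eq_getElem, hp.getElem i.isLt] using h2

lemma getD_mem_cylinder (σ : List ℕ) : (fun i => σ.getD i 0) ∈ cylinder σ := by
  intro i
  simp [List.getD_eq_getElem _ _ i.isLt]


theorem stmt4 (h : ℕ → ℕ) (h1 : ∀ n, 1 ≤ h n) (hlim : LimsupInfty h) :
    (∃ F : Set (ℕ → ℕ), fN h F ∧ IsMeagre Fᶜ) ∧
    (∃ A B : Set (ℕ → ℕ), fN h A ∧ IsMeagre B ∧ A ∪ B = Set.univ) := by
  classical
  set τ : ℕ → List ℕ := fun k => ((Encodable.decode (α := List ℕ) k.unpair.1).getD []) with hτ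
  have hex : ∀ k : ℕ, ∃ n, n ≥ (τ k).length ∧ 2^k ≤ h n := fun k =>
    Filter.frequently_atTop.1 (hlim (2^k)) (τ k).length
  choose L hL1 hL2 using hex
  set σ : ℕ → List ℕ := fun k => τ k ++ List.replicate (L k - (τ k).length) 0 with hσ
  have hpre : ∀ k, τ k <+: σ k := fun k => List.prefix_append _ _
  have hlen : ∀ k, (σ k).length = L k := by
    intro k; simp [hσ, Nat.add_sub_cancel' (hL1 k)]
  have hcost : ∀ k, (1:ℝ)/(h (σ k).length : ℝ) ≤ (1/2)^k := by
    intro k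
    rw [hlen k, one_div, div_pow, one_pow, one_div]
    apply inv_anti₀ (by positivity)
    exact_mod_cast (hL2 k).trans_eq rfl
  set D : ℕ → Set (ℕ → ℕ) := fun m => ⋃ k, ⋃ _ : m ≤ k, cylinder (σ k) with hD
  set F : Set (ℕ → ℕ) := ⋂ m, D m with hF
  -- fN
  have hfN : ∀ ε : ℝ, 0 < ε →
      ∃ s : ℕ → List ℕ,
        Summable (fun n => (1 : ℝ) / (h (s n).length : ℝ)) ∧
        (∑' n, (1 : ℝ) / (h (s n).length : ℝ)) < ε ∧
        F ⊆ ⋃ n, cylinder (s n) := by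
    intro ε hε
    obtain ⟨m, hm⟩ : ∃ m : ℕ, (1/2:ℝ)^m < ε/2 :=
      exists_pow_lt_of_lt_one (by linarith) (by norm_num)
    have hgeo : Summable (fun n : ℕ => (1/2:ℝ)^(m+n)) := by
      simpa [pow_add] using (summable_geometric_of_lt_one (by norm_num) (by norm_num :
        (1/2:ℝ) < 1)).mul_left ((1/2:ℝ)^m)
    have hsumm : Summable (fun n => (1 : ℝ) / (h (σ (m+n)).length : ℝ)) :=
      Summable.of_nonneg_of_le (fun n => by positivity) (fun n => hcost (m+n)) hgeo
    refine ⟨fun n => σ (m+n), hsumm, ?_, ?_⟩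
    · have h1' : (∑' n, (1 : ℝ) / (h (σ (m+n)).length : ℝ)) ≤ ∑' n : ℕ, (1/2:ℝ)^(m+n) :=
        Summable.tsum_le_tsum (fun n => hcost (m+n)) hsumm hgeo
      have h2' : (∑' n : ℕ, (1/2:ℝ)^(m+n)) = (1/2:ℝ)^m * 2 := by
        simp_rw [pow_add]
        rw [tsum_mul_left, tsum_geometric_of_lt_one (by norm_num) (by norm_num)]
        norm_num
      calc (∑' n, (1 : ℝ) / (h (σ (m+n)).length : ℝ)) ≤ (1/2:ℝ)^m * 2 := h2' ▸ h1'
        _ < ε := by linarith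
    · intro x hx
      have := Set.mem_iInter.1 hx m
      simp only [hD, Set.mem_iUnion] at this
      obtain ⟨k, hk, hxk⟩ := this
      exact Set.mem_iUnion.2 ⟨k - m, by simpa [Nat.add_sub_cancel' hk] using hxk⟩
  -- meagre
  have hdense : ∀ m, Dense (D m) := by
    intro m
    rw [dense_iff_inter_open]
    rintro U hU ⟨x, hx⟩
    obtain ⟨I, u, hu, hsub⟩ := isOpen_pi_iff.1 hU x hx
    set N : ℕ := I.sup id + 1 with hN
    set t : List ℕ := (List.range N).map x with ht
    set k := Nat.pair (Encodable.encode t) m with hk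
    have hkm : m ≤ k := Nat.right_le_pair _ _
    have hτk : τ k = t := by
      simp [hτ, hk, Nat.unpair_pair, Encodable.encodek]
    have htlen : t.length = N := by simp [ht]
    have hval : ∀ i < N, (σ k).getD i 0 = x i := by
      intro i hiN
      have hit : i < (τ k).length := by rw [hτk, htlen]; exact hiN
      have hik : i < (σ k).length := lt_of_lt_of_le hit (hpre k).length_le
      rw [List.getD_eq_getElem _ _ hik, ← (hpre k).getElem hit]
      simp [hτk, ht, hiN]
    refine ⟨fun i => (σ k).getD i 0, hsub ?_, ?_⟩
    · intro i hi
      have hiN : i < N := Nat.lt_succ_of_le (Finset.le_sup (f := id) hi)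
      show (σ k).getD i 0 ∈ u i
      rw [hval i hiN]
      exact (hu i hi).2
    · exact Set.mem_iUnion.2 ⟨k, Set.mem_iUnion.2 ⟨hkm, getD_mem_cylinder (σ k)⟩⟩
  have hopen : ∀ m, IsOpen (D m) := fun m =>
    isOpen_iUnion fun k => isOpen_iUnion fun _ => isOpen_cylinder (σ k)
  have hmeagre : IsMeagre Fᶜ := by
    rw [hF, Set.compl_iInter]
    apply isMeagre_iUnion
    intro m
    rw [IsMeagre, compl_compl]
    exact residual_of_dense_open (hopen m) (hdense m)
  exact ⟨⟨F, hfN, hmeagre⟩, F, Fᶜ, hfN, hmeagre, Set.union_compl_self F⟩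
end

section
/- For every meager set A ⊆ ω^ω there exists a nowhere dense set B ⊆ ω^ω such that B ∉ M_- and B ∩ A = ∅. -/
open Filter Set

/-! ### Auxiliary development -/

noncomputable section Aux

/-- cylinder given by a point and a length -/
def cylP (x : ℕ → ℕ) (q : ℕ) : Set (ℕ → ℕ) := {w | ∀ i, i < q → w i = x i}

lemma cylP_isOpen (x : ℕ → ℕ) (q : ℕ) : IsOpen (cylP x q) := by
  have h : cylP x q = ⋂ i ∈ Finset.range q, (fun w : ℕ → ℕ => w i) ⁻¹' {x i} := by
    ext w; simp [cylP]
  rw [h]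
  exact isOpen_biInter_finset fun i _ =>
    (continuous_apply i).isOpen_preimage _ (isOpen_discrete _)

lemma exists_cylP_subset {U : Set (ℕ → ℕ)} (hU : IsOpen U) {x : ℕ → ℕ} (hx : x ∈ U) :
    ∃ q, cylP x q ⊆ U := by
  obtain ⟨I, u, h1, h2⟩ := isOpen_pi_iff.mp hU x hx
  refine ⟨I.sup id + 1, fun w hw => h2 ?_⟩
  intro a ha
  have ha' : a ∈ I := ha
  have hlt : a < I.sup id + 1 := Nat.lt_succ_of_le (Finset.le_sup (f := id) ha')
  rw [hw a hlt]
  exact (h1 a ha').2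

lemma escapeNWD (F : Set (ℕ → ℕ)) (hF : IsNowhereDense F) (σ : ℕ → ℕ) (m : ℕ) :
    ∃ qz : ℕ × (ℕ → ℕ), m < qz.1 ∧ (∀ i, i < m → qz.2 i = σ i) ∧
      ∀ w, w ∈ cylP qz.2 qz.1 → w ∉ F := by
  have hint : interior (closure F) = ∅ := hF
  have hnot : ¬ cylP σ m ⊆ closure F := by
    intro h
    have hσ : σ ∈ interior (closure F) :=
      interior_maximal h (cylP_isOpen σ m) (fun i _ => rfl)
    rw [hint] at hσ
    exact hσ
  obtain ⟨z, hz1, hz2⟩ := Set.not_subset.mp hnot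
  obtain ⟨q, hq⟩ := exists_cylP_subset (isClosed_closure (s := F)).isOpen_compl hz2
  refine ⟨(max (m + 1) q, z), lt_of_lt_of_le (Nat.lt_succ_self m) (le_max_left _ _),
    fun i hi => hz1 i hi, ?_⟩
  intro w hw hwF
  exact hq (fun i hi => hw i (lt_of_lt_of_le hi (le_max_right _ _))) (subset_closure hwF)

open Classical in
/-- one escape step: from a prefix `σ` of length `m`, extend to a longer prefix whose
cylinder avoids `F` (when `F` is nowhere dense). -/
def stepE (F : Set (ℕ → ℕ)) (σ : ℕ → ℕ) (m : ℕ) : ℕ × (ℕ → ℕ) :=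
  if h : IsNowhereDense F then (escapeNWD F h σ m).choose else (m + 1, σ)

lemma stepE_lt (F : Set (ℕ → ℕ)) (σ : ℕ → ℕ) (m : ℕ) : m < (stepE F σ m).1 := by
  unfold stepE; split
  · exact (escapeNWD F ‹_› σ m).choose_spec.1
  · exact Nat.lt_succ_self m

lemma stepE_agree (F : Set (ℕ → ℕ)) (σ : ℕ → ℕ) (m : ℕ) :
    ∀ i, i < m → (stepE F σ m).2 i = σ i := by
  unfold stepE; split
  · exact (escapeNWD F ‹_› σ m).choose_spec.2.1
  · exact fun i _ => rfl

lemma stepE_avoid {F : Set (ℕ → ℕ)} (h : IsNowhereDense F) (σ : ℕ → ℕ) (m : ℕ) :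
    ∀ w, w ∈ cylP (stepE F σ m).2 (stepE F σ m).1 → w ∉ F := by
  unfold stepE; rw [dif_pos h]
  exact (escapeNWD F h σ m).choose_spec.2.2

/-- end of the announced block -/
def blockEnd (p v : ℕ) : ℕ := p + 1 + v / 2

/-- the deterministic parse of `x` : sequence of "ours" positions -/
def parseP (F : ℕ → Set (ℕ → ℕ)) (x : ℕ → ℕ) : ℕ → ℕ
  | 0 => 0
  | k + 1 =>
      (stepE (F k) (restrIco x 0 (blockEnd (parseP F x k) (x (parseP F x k))))
        (blockEnd (parseP F x k) (x (parseP F x k)))).1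

def stepz (F : ℕ → Set (ℕ → ℕ)) (x : ℕ → ℕ) (k : ℕ) : ℕ × (ℕ → ℕ) :=
  stepE (F k) (restrIco x 0 (blockEnd (parseP F x k) (x (parseP F x k))))
    (blockEnd (parseP F x k) (x (parseP F x k)))

lemma parseP_succ (F : ℕ → Set (ℕ → ℕ)) (x : ℕ → ℕ) (k : ℕ) :
    parseP F x (k+1) = (stepz F x k).1 := rfl

lemma blockEnd_lt_parseP (F : ℕ → Set (ℕ → ℕ)) (x : ℕ → ℕ) (k : ℕ) :
    blockEnd (parseP F x k) (x (parseP F x k)) < parseP F x (k+1) :=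
  stepE_lt _ _ _

lemma parseP_lt (F : ℕ → Set (ℕ → ℕ)) (x : ℕ → ℕ) (k : ℕ) :
    parseP F x k < parseP F x (k+1) := by
  have h := blockEnd_lt_parseP F x k
  unfold blockEnd at h
  omega

lemma parseP_strictMono (F : ℕ → Set (ℕ → ℕ)) (x : ℕ → ℕ) :
    StrictMono (parseP F x) :=
  strictMono_nat_of_lt_succ (parseP_lt F x)

lemma le_parseP (F : ℕ → Set (ℕ → ℕ)) (x : ℕ → ℕ) (k : ℕ) : k ≤ parseP F x k := by
  induction k with
  | zero => exact Nat.zero_le _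
  | succ k ih => exact Nat.lt_of_le_of_lt ih (parseP_lt F x k)

/-- the nowhere dense set not in `M_-` avoiding `⋃ k, F k` -/
def Bset (F : ℕ → Set (ℕ → ℕ)) : Set (ℕ → ℕ) :=
  {x | ∀ k, Even (x (parseP F x k)) ∧
    ∀ i, blockEnd (parseP F x k) (x (parseP F x k)) ≤ i → i < parseP F x (k+1) →
      x i = (stepz F x k).2 i}

lemma parse_congr (F : ℕ → Set (ℕ → ℕ)) {x y : ℕ → ℕ} {K : ℕ}
    (h : ∀ i, i < parseP F x K → y i = x i) :
    ∀ k, k ≤ K → parseP F y k = parseP F x k := by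
  intro k
  induction k with
  | zero => intro _; rfl
  | succ k ih =>
    intro hk
    have hk' : k ≤ K := Nat.le_of_succ_le hk
    have ihk := ih hk'
    have hpk_lt : parseP F x k < parseP F x K :=
      parseP_strictMono F x (Nat.lt_of_lt_of_le (Nat.lt_succ_self k) hk)
    have hy : y (parseP F x k) = x (parseP F x k) := h _ hpk_lt
    have hm_lt : blockEnd (parseP F x k) (x (parseP F x k)) < parseP F x (k+1) :=
      blockEnd_lt_parseP F x k
    have hm_le : blockEnd (parseP F x k) (x (parseP F x k)) ≤ parseP F x K :=
      le_of_lt (lt_of_lt_of_le hm_lt ((parseP_strictMono F x).monotone hk))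
    have hrestr : restrIco y 0 (blockEnd (parseP F x k) (x (parseP F x k))) =
        restrIco x 0 (blockEnd (parseP F x k) (x (parseP F x k))) := by
      funext i
      unfold restrIco
      split
      · next hcond => exact h i (by omega)
      · rfl
    show (stepE (F k) (restrIco y 0 (blockEnd (parseP F y k) (y (parseP F y k))))
        (blockEnd (parseP F y k) (y (parseP F y k)))).1 = _
    rw [ihk, hy, hrestr]
    rfl

lemma Bset_avoid (F : ℕ → Set (ℕ → ℕ)) {x : ℕ → ℕ} (hx : x ∈ Bset F) (k : ℕ)
    (hFk : IsNowhereDense (F k)) : x ∉ F k := by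
  apply stepE_avoid hFk
    (restrIco x 0 (blockEnd (parseP F x k) (x (parseP F x k))))
    (blockEnd (parseP F x k) (x (parseP F x k))) x
  intro i hi
  by_cases him : i < blockEnd (parseP F x k) (x (parseP F x k))
  · rw [stepE_agree _ _ _ i him]
    unfold restrIco
    rw [if_pos ⟨Nat.zero_le i, him⟩]
  · exact (hx k).2 i (le_of_not_gt him) hi

/-- recursive construction of a member of `Bset F` matching `xF` on infinitely many
intervals of the partition `a`. -/
def matcher (F : ℕ → Set (ℕ → ℕ)) (xF a : ℕ → ℕ) : ℕ → ℕ × (ℕ → ℕ)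
  | 0 => (0, fun _ => 0)
  | k + 1 =>
    let p := (matcher F xF a k).1
    let σ := (matcher F xF a k).2
    let m := a (p + 2)
    let σ' : ℕ → ℕ := fun i =>
      if i < p then σ i else if i = p then 2 * (m - (p + 1)) else if i < m then xF i else 0
    let e := stepE (F k) (restrIco σ' 0 m) m
    (e.1, fun i => if i < m then σ' i else e.2 i)

def mB (F : ℕ → Set (ℕ → ℕ)) (xF a : ℕ → ℕ) (k : ℕ) : ℕ :=
  a ((matcher F xF a k).1 + 2)

def sigP (F : ℕ → Set (ℕ → ℕ)) (xF a : ℕ → ℕ) (k : ℕ) : ℕ → ℕ := fun i =>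
  if i < (matcher F xF a k).1 then (matcher F xF a k).2 i
  else if i = (matcher F xF a k).1 then
    2 * (mB F xF a k - ((matcher F xF a k).1 + 1))
  else if i < mB F xF a k then xF i else 0

lemma matcher_succ (F : ℕ → Set (ℕ → ℕ)) (xF a : ℕ → ℕ) (k : ℕ) :
    matcher F xF a (k + 1) =
      ((stepE (F k) (restrIco (sigP F xF a k) 0 (mB F xF a k)) (mB F xF a k)).1,
       fun i => if i < mB F xF a k then sigP F xF a k i
         else (stepE (F k) (restrIco (sigP F xF a k) 0 (mB F xF a k)) (mB F xF a k)).2 i) :=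
  rfl

lemma Bset_not_Mminus (F : ℕ → Set (ℕ → ℕ)) : ¬ Mminus (Bset F) := by
  rintro ⟨xF, a, _ha0, hmono, hsub⟩
  set g := matcher F xF a with hg
  set x : ℕ → ℕ := fun i => (g (i + 1)).2 i with hxdef
  have hple : ∀ k, (g k).1 + 2 ≤ mB F xF a k := fun k => hmono.le_apply
  have hplt : ∀ k, mB F xF a k < (g (k+1)).1 := by
    intro k
    rw [hg, matcher_succ]
    exact stepE_lt _ _ _
  have hpmono : ∀ k, (g k).1 < (g (k+1)).1 := by
    intro k
    have h1 := hple k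
    have h2 := hplt k
    omega
  have hpge : ∀ k, k ≤ (g k).1 := by
    intro k
    induction k with
    | zero => exact Nat.zero_le _
    | succ k ih => exact Nat.lt_of_le_of_lt ih (hpmono k)
  have hpmono' : ∀ {k k'}, k ≤ k' → (g k).1 ≤ (g k').1 :=
    fun {k k'} h => (strictMono_nat_of_lt_succ hpmono).monotone h
  have hcoh1 : ∀ k, ∀ i, i < (g k).1 → (g (k+1)).2 i = (g k).2 i := by
    intro k i hi
    rw [hg, matcher_succ]
    have him : i < mB F xF a k := by have := hple k; omega
    simp only [if_pos him]
    unfold sigP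
    rw [← hg, if_pos hi]
  have hcoh : ∀ k k', k ≤ k' → ∀ i, i < (g k).1 → (g k').2 i = (g k).2 i := by
    intro k k' hkk'
    induction k' with
    | zero =>
      intro i hi
      have hk0 : k = 0 := Nat.le_zero.mp hkk'
      rw [hk0]
    | succ k' ih =>
      intro i hi
      rcases Nat.lt_or_ge k (k'+1) with h | h
      · have hk' : k ≤ k' := Nat.lt_succ_iff.mp h
        rw [hcoh1 k' i (lt_of_lt_of_le hi (hpmono' hk')), ih hk' i hi]
      · have hkeq : k = k' + 1 := le_antisymm hkk' h
        rw [hkeq]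
  have hxg : ∀ k, ∀ i, i < (g k).1 → x i = (g k).2 i := by
    intro k i hi
    rw [hxdef]
    rcases Nat.le_total k (i+1) with h | h
    · exact hcoh k (i+1) h i hi
    · have hi' : i < (g (i+1)).1 := lt_of_lt_of_le (Nat.lt_succ_self i) (hpge (i+1))
      rw [hcoh (i+1) k h i hi']
  have hxsig : ∀ k, ∀ i, (g k).1 ≤ i → i < mB F xF a k → x i = sigP F xF a k i := by
    intro k i _hi him
    have hi1 : i < (g (k+1)).1 := lt_of_lt_of_le him (le_of_lt (hplt k))
    rw [hxg (k+1) i hi1, hg, matcher_succ]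
    simp only [if_pos him]
  have hxval : ∀ k, x ((g k).1) = 2 * (mB F xF a k - ((g k).1 + 1)) := by
    intro k
    have h1 := hple k
    rw [hxsig k ((g k).1) le_rfl (by omega)]
    unfold sigP
    rw [← hg, if_neg (lt_irrefl _), if_pos rfl]
  have hblockEnd : ∀ k, blockEnd ((g k).1) (x ((g k).1)) = mB F xF a k := by
    intro k
    rw [hxval k]
    unfold blockEnd
    rw [Nat.mul_div_cancel_left _ (by norm_num : 0 < 2)]
    have := hple k
    omega
  have hrestr : ∀ k, restrIco x 0 (mB F xF a k) = restrIco (sigP F xF a k) 0 (mB F xF a k) := by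
    intro k
    funext i
    unfold restrIco
    split
    · next h =>
      rcases Nat.lt_or_ge i ((g k).1) with h' | h'
      · rw [hxg k i h']
        unfold sigP
        rw [← hg, if_pos h']
      · exact hxsig k i h' h.2
    · rfl
  have hparse : ∀ k, parseP F x k = (g k).1 := by
    intro k
    induction k with
    | zero => rfl
    | succ k ih =>
      show (stepE (F k) (restrIco x 0 (blockEnd (parseP F x k) (x (parseP F x k))))
        (blockEnd (parseP F x k) (x (parseP F x k)))).1 = _
      rw [ih, hblockEnd k, hrestr k, hg, matcher_succ]
  have hxB : x ∈ Bset F := by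
    intro k
    constructor
    · rw [hparse k, hxval k]
      exact ⟨mB F xF a k - ((g k).1 + 1), by ring⟩
    · intro i h1 h2
      rw [parseP_succ] at h2
      unfold stepz at h2 ⊢
      rw [hparse k, hblockEnd k, hrestr k] at h2 ⊢
      have h1' : mB F xF a k ≤ i := by rwa [hparse k, hblockEnd k] at h1
      have hi1 : i < (g (k+1)).1 := by rwa [hg, matcher_succ]
      rw [hxg (k+1) i hi1, hg, matcher_succ]
      simp only [if_neg (not_lt.mpr h1')]
  have hmatch : ∀ k, ∀ i, a ((g k).1 + 1) ≤ i → i < a ((g k).1 + 2) → x i = xF i := by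
    intro k i h1 h2
    have hpk : (g k).1 < a ((g k).1 + 1) :=
      lt_of_lt_of_le (Nat.lt_succ_self _) hmono.le_apply
    have hi1 : (g k).1 ≤ i := by omega
    have hi2 : i < mB F xF a k := h2
    rw [hxsig k i hi1 hi2]
    unfold sigP
    rw [← hg, if_neg (by omega), if_neg (by omega), if_pos hi2]
  have hfreq : ∃ᶠ n in Filter.atTop, ∀ i, a n ≤ i → i < a (n+1) → x i = xF i := by
    rw [Filter.frequently_atTop]
    intro N
    exact ⟨(g N).1 + 1, by have := hpge N; omega, hmatch N⟩
  have hev := hsub hxB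
  obtain ⟨n, hall, i, hi1, hi2, hi3⟩ := (hfreq.and_eventually hev).exists
  exact hi3 (hall i hi1 hi2)

lemma Bset_nwd (F : ℕ → Set (ℕ → ℕ)) : IsNowhereDense (Bset F) := by
  show interior (closure (Bset F)) = ∅
  rw [Set.eq_empty_iff_forall_notMem]
  intro x hx
  obtain ⟨q0, hq0⟩ := exists_cylP_subset isOpen_interior hx
  have hq0' : cylP x q0 ⊆ closure (Bset F) := hq0.trans interior_subset
  set z : ℕ → ℕ := fun i => if i < q0 then x i else 0 with hz
  set r := parseP F z q0 with hr
  have hrq : q0 ≤ r := le_parseP F z q0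
  set z' : ℕ → ℕ := fun i => if i = r then 1 else z i with hz'
  have hz'mem : z' ∈ closure (Bset F) := by
    apply hq0'
    intro i hi
    have hir : i ≠ r := by omega
    rw [hz']
    simp only [if_neg hir, hz, if_pos hi]
  obtain ⟨w, hw1, hw2⟩ := mem_closure_iff.mp hz'mem (cylP z' (r+1)) (cylP_isOpen _ _)
    (fun i _ => rfl)
  have hwz : ∀ i, i < parseP F z q0 → w i = z i := by
    intro i hi
    rw [hw1 i (by omega), hz']
    exact if_neg (by omega)
  have hpw : parseP F w q0 = r := parse_congr F hwz q0 le_rfl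
  have heven := (hw2 q0).1
  rw [hpw] at heven
  have hwr : w r = 1 := by
    rw [hw1 r (Nat.lt_succ_self r), hz']
    simp
  rw [hwr] at heven
  obtain ⟨t, ht⟩ := heven
  omega

end Aux


theorem stmt5 (A : Set (ℕ → ℕ)) (hA : IsMeagre A) :
    ∃ B : Set (ℕ → ℕ), IsNowhereDense B ∧ ¬ Mminus B ∧ B ∩ A = ∅ := by
  obtain ⟨S, hS_nwd, hS_cnt, hS_sub⟩ := isMeagre_iff_countable_union_isNowhereDense.mp hA
  have hS'cnt : (insert (∅ : Set (ℕ → ℕ)) S).Countable := hS_cnt.insert _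
  obtain ⟨F, hF⟩ := hS'cnt.exists_eq_range (Set.insert_nonempty _ _)
  have hFnwd : ∀ k, IsNowhereDense (F k) := by
    intro k
    have hk : F k ∈ insert (∅ : Set (ℕ → ℕ)) S := hF ▸ Set.mem_range_self k
    rcases hk with h | h
    · rw [h]; exact isNowhereDense_empty
    · exact hS_nwd _ h
  have hAsub : A ⊆ ⋃ k, F k := by
    intro y hy
    obtain ⟨t, htS, hyt⟩ := hS_sub hy
    have ht : t ∈ Set.range F := hF ▸ Set.mem_insert_of_mem _ htS
    obtain ⟨k, hk⟩ := ht
    exact Set.mem_iUnion.mpr ⟨k, hk ▸ hyt⟩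
  refine ⟨Bset F, Bset_nwd F, Bset_not_Mminus F, ?_⟩
  rw [Set.eq_empty_iff_forall_notMem]
  rintro y ⟨hyB, hyA⟩
  obtain ⟨k, hk⟩ := Set.mem_iUnion.mp (hAsub hyA)
  exact Bset_avoid F hyB k (hFnwd k) hk
end

section
/- There exists a family (M_α)_{α < add(M)} of pairwise disjoint Borel meager subsets of ω^ω such that M_α ∉ M_- for every α; in particular, the σ-ideal M_- does not have the add(M)-chain condition. -/
open Filter Set

/-- `add(M)`: the least cardinality of a family of meager subsets of the Baire space whose
union is not meager. -/
noncomputable def addMeager : Cardinal :=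
  sInf {c : Cardinal |
    ∃ A : Set (Set (ℕ → ℕ)), Cardinal.mk A = c ∧ (∀ s ∈ A, IsMeagre s) ∧ ¬ IsMeagre (⋃₀ A)}

namespace Stmt6Aux
open MeasureTheory


def goodAt (x : ℕ → ℕ) (n : ℕ) : Prop :=
  ¬(x n = 0 ∧ x (n+1) = 1 ∧ x (n+2) = 0) ∨ ∃ u, u ≤ n ∧ 2 ≤ x u ∧ n + 2 ≤ u + x u

def Ck (k : ℕ) : Set (ℕ → ℕ) := {x | ∀ n, k ≤ n → goodAt x n}

def IsMarker (x : ℕ → ℕ) (u : ℕ) : Prop :=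
  x u = 1 ∧ ∀ v, v < u → ¬(2 ≤ x v ∧ u ≤ v + x v)

def NthMarker (x : ℕ → ℕ) (n u : ℕ) : Prop :=
  IsMarker x u ∧ {v | v < u ∧ IsMarker x v}.ncard = n

def Fy (y : ℕ → ℕ) : Set (ℕ → ℕ) :=
  {x | (∃ k, ∀ n, k ≤ n → goodAt x n) ∧ ∀ n, ∃ u, NthMarker x n u ∧ x (u+2) = y n}

lemma nthMarker_unique {x : ℕ → ℕ} {n u u' : ℕ} (h : NthMarker x n u)
    (h' : NthMarker x n u') : u = u' := by
  by_contra hne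
  wlog hlt : u < u' generalizing u u'
  · exact this h' h (Ne.symm hne) (by omega)
  have hfin : {v | v < u' ∧ IsMarker x v}.Finite :=
    (Set.finite_Iio u').subset (fun v hv => hv.1)
  have hsub : {v | v < u ∧ IsMarker x v} ⊂ {v | v < u' ∧ IsMarker x v} := by
    constructor
    · intro v hv; exact ⟨hv.1.trans hlt, hv.2⟩
    · intro hc
      have : u ∈ {v | v < u ∧ IsMarker x v} := hc ⟨hlt, h.1⟩
      have : u < u := this.1
      omega
  have hlt2 := Set.ncard_lt_ncard hsub hfin
  rw [h.2, h'.2] at hlt2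
  exact lt_irrefl n hlt2

lemma Fy_disjoint {y y' : ℕ → ℕ} (h : y ≠ y') : Fy y ∩ Fy y' = ∅ := by
  ext x
  simp only [Set.mem_inter_iff, Set.mem_empty_iff_false, iff_false, not_and]
  rintro ⟨_, h1⟩ ⟨_, h2⟩
  apply h; funext n
  obtain ⟨u, hu, hv⟩ := h1 n
  obtain ⟨u', hu', hv'⟩ := h2 n
  rw [← hv, ← hv', nthMarker_unique hu hu']

lemma isOpen_coord (i : ℕ) (S : Set ℕ) : IsOpen {x : ℕ → ℕ | x i ∈ S} := by
  have : {x : ℕ → ℕ | x i ∈ S} = (fun p : ℕ → ℕ => p i) ⁻¹' S := rfl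
  rw [this]
  exact ((continuous_apply i : Continuous fun p : ℕ → ℕ => p i)).isOpen_preimage S
    (isOpen_discrete S)

lemma isOpen_bad (n : ℕ) : IsOpen {x : ℕ → ℕ | ¬ goodAt x n} := by
  have he : {x : ℕ → ℕ | ¬ goodAt x n} =
      ({x : ℕ → ℕ | x n ∈ ({0} : Set ℕ)} ∩ {x | x (n+1) ∈ ({1} : Set ℕ)} ∩
        {x | x (n+2) ∈ ({0} : Set ℕ)}) ∩
      ⋂ u ∈ Set.Iic n, {x : ℕ → ℕ | x u ∈ {t | ¬(2 ≤ t ∧ n + 2 ≤ u + t)}} := by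
    ext x
    simp only [goodAt, mem_setOf_eq, Set.mem_inter_iff, Set.mem_iInter, Set.mem_Iic,
      Set.mem_singleton_iff, not_or, not_not, not_exists]
    constructor
    · rintro ⟨hp, hc⟩
      exact ⟨⟨⟨hp.1, hp.2.1⟩, hp.2.2⟩, fun u hu => fun hh => hc u ⟨hu, hh.1, hh.2⟩⟩
    · rintro ⟨⟨⟨h1, h2⟩, h3⟩, hc⟩
      exact ⟨⟨h1, h2, h3⟩, fun u hh => hc u hh.1 ⟨hh.2.1, hh.2.2⟩⟩
  rw [he]
  exact (((isOpen_coord _ _).inter (isOpen_coord _ _)).inter (isOpen_coord _ _)).inter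
    ((Set.finite_Iic n).isOpen_biInter (fun u _ => isOpen_coord _ _))

lemma isClosed_Ck (k : ℕ) : IsClosed (Ck k) := by
  have h : Ck k = (⋃ (n : ℕ) (_ : k ≤ n), {x : ℕ → ℕ | ¬ goodAt x n})ᶜ := by
    ext x
    simp only [Ck, mem_setOf_eq, Set.mem_compl_iff, Set.mem_iUnion, not_exists]
    constructor
    · intro h n hn hb; exact hb (h n hn)
    · intro h n hn; by_contra hb; exact h n hn hb
  rw [h]
  exact (isOpen_iUnion (fun n => isOpen_iUnion (fun _ => isOpen_bad n))).isClosed_compl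

lemma interior_Ck (k : ℕ) : interior (Ck k) = ∅ := by
  rw [Set.eq_empty_iff_forall_notMem]
  intro x hx
  set N : ℕ → ℕ := fun j => k + j + 1 + (Finset.range j).sup (fun u => u + x u) with hN
  set f : ℕ → ℕ → ℕ := fun j i => if i < j then x i else if i = N j + 1 then 1 else 0 with hf
  have htend : Tendsto f atTop (nhds x) := by
    rw [tendsto_pi_nhds]
    intro i
    apply Tendsto.congr' _ tendsto_const_nhds
    filter_upwards [eventually_gt_atTop i] with j hj
    simp [hf, hj]
  have hev : f ⁻¹' interior (Ck k) ∈ atTop := htend (isOpen_interior.mem_nhds hx)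
  obtain ⟨j, hj⟩ := Filter.nonempty_of_mem hev
  have hmem : f j ∈ Ck k := interior_subset hj
  have hNeq : N j = k + j + 1 + (Finset.range j).sup (fun u => u + x u) := by simp [hN]
  have hgood := hmem (N j) (by omega)
  have hb : ¬ goodAt (f j) (N j) := by
    simp only [goodAt, not_or, not_not, not_exists]
    constructor
    · refine ⟨?_, ?_, ?_⟩
      · show f j (N j) = 0
        simp only [hf]; rw [if_neg (by omega), if_neg (by omega)]
      · show f j (N j + 1) = 1
        simp only [hf]; rw [if_neg (by omega)]; simp
      · show f j (N j + 2) = 0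
        simp only [hf]; rw [if_neg (by omega), if_neg (by omega)]
    · intro u hc
      obtain ⟨hu, h2, h3⟩ := hc
      by_cases huj : u < j
      · have hle : u + x u ≤ (Finset.range j).sup (fun u => u + x u) :=
          Finset.le_sup (f := fun u => u + x u) (Finset.mem_range.2 huj)
        simp only [hf, if_pos huj] at h2 h3
        omega
      · simp only [hf, if_neg huj] at h2
        by_cases hE : u = N j + 1 <;> simp [hE] at h2
  exact hb hgood

lemma meagre_Ck (k : ℕ) : IsMeagre (Ck k) := by
  have hnwd : IsNowhereDense (Ck k) := by
    rw [IsNowhereDense, (isClosed_Ck k).closure_eq, interior_Ck]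
  exact isMeagre_iff_countable_union_isNowhereDense.2
    ⟨{Ck k}, by simpa using hnwd, Set.countable_singleton _, by simp⟩

lemma meagre_Fy (y : ℕ → ℕ) : IsMeagre (Fy y) := by
  refine (isMeagre_iUnion meagre_Ck).mono ?_
  rintro x ⟨⟨k, hk⟩, -⟩
  exact Set.mem_iUnion.2 ⟨k, hk⟩



lemma meas_coord (i : ℕ) (S : Set ℕ) : MeasurableSet[borel (ℕ → ℕ)] {x : ℕ → ℕ | x i ∈ S} :=
  MeasurableSpace.measurableSet_generateFrom (isOpen_coord i S)

lemma meas_marker (u : ℕ) : MeasurableSet[borel (ℕ → ℕ)] {x | IsMarker x u} := by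
  letI : MeasurableSpace (ℕ → ℕ) := borel (ℕ → ℕ)
  have he : {x : ℕ → ℕ | IsMarker x u} =
      {x : ℕ → ℕ | x u ∈ ({1} : Set ℕ)} ∩
        ⋂ v ∈ Set.Iio u, {x : ℕ → ℕ | x v ∈ {t | ¬(2 ≤ t ∧ u ≤ v + t)}} := by
    ext x
    simp only [IsMarker, mem_setOf_eq, Set.mem_inter_iff, Set.mem_iInter, Set.mem_Iio,
      Set.mem_singleton_iff]
  rw [he]
  exact (meas_coord u _).inter
    (MeasurableSet.biInter (Set.to_countable _) (fun v _ => meas_coord v _))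

lemma meas_count (u n : ℕ) :
    MeasurableSet[borel (ℕ → ℕ)] {x | {v | v < u ∧ IsMarker x v}.ncard = n} := by
  classical
  letI : MeasurableSpace (ℕ → ℕ) := borel (ℕ → ℕ)
  have he : {x : ℕ → ℕ | {v | v < u ∧ IsMarker x v}.ncard = n}
      = ⋃ (s : Finset ℕ) (_ : s.card = n ∧ s ⊆ Finset.range u),
          ⋂ v ∈ Set.Iio u, {x : ℕ → ℕ | IsMarker x v ↔ v ∈ s} := by
    ext x
    simp only [mem_setOf_eq, Set.mem_iUnion, Set.mem_iInter, Set.mem_Iio, exists_prop]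
    constructor
    · intro h
      have hfin : {v | v < u ∧ IsMarker x v}.Finite :=
        (Set.finite_Iio u).subset (fun v hv => hv.1)
      refine ⟨hfin.toFinset, ⟨?_, ?_⟩, ?_⟩
      · rw [← h]
        exact (Set.ncard_eq_toFinset_card _ hfin).symm
      · intro v hv
        simp only [Set.Finite.mem_toFinset, mem_setOf_eq] at hv
        exact Finset.mem_range.2 hv.1
      · intro v hv
        simp only [Set.Finite.mem_toFinset, mem_setOf_eq]
        constructor
        · intro hm; exact ⟨hv, hm⟩
        · intro hm; exact hm.2
    · rintro ⟨s, ⟨hcard, hsub⟩, h⟩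
      have hset : {v | v < u ∧ IsMarker x v} = ↑s := by
        ext v
        simp only [mem_setOf_eq, Finset.coe_sort_coe, Finset.mem_coe]
        constructor
        · rintro ⟨h1, h2⟩; exact (h v h1).1 h2
        · intro hv
          have hvu : v < u := Finset.mem_range.1 (hsub hv)
          exact ⟨hvu, (h v hvu).2 hv⟩
      rw [hset, Set.ncard_coe_finset, hcard]
  rw [he]
  refine MeasurableSet.iUnion (fun s => MeasurableSet.iUnion (fun _ =>
    MeasurableSet.biInter (Set.to_countable _) (fun v _ => ?_)))
  have : {x : ℕ → ℕ | IsMarker x v ↔ v ∈ s} =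
      if v ∈ s then {x | IsMarker x v} else {x | IsMarker x v}ᶜ := by
    by_cases hv : v ∈ s <;> simp [hv, Set.ext_iff]
  rw [this]
  split
  · exact meas_marker v
  · exact (meas_marker v).compl

lemma meas_good (n : ℕ) : MeasurableSet[borel (ℕ → ℕ)] {x | goodAt x n} := by
  letI : MeasurableSpace (ℕ → ℕ) := borel (ℕ → ℕ)
  have he : {x : ℕ → ℕ | goodAt x n} =
      ({x : ℕ → ℕ | x n ∈ ({0} : Set ℕ)} ∩ {x | x (n+1) ∈ ({1} : Set ℕ)} ∩
        {x | x (n+2) ∈ ({0} : Set ℕ)})ᶜ ∪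
      ⋃ (u : ℕ) (_ : u ≤ n), ({x : ℕ → ℕ | x u ∈ {t | 2 ≤ t}} ∩
        {x : ℕ → ℕ | x u ∈ {t | n + 2 ≤ u + t}}) := by
    ext x
    simp only [goodAt, mem_setOf_eq, Set.mem_union, Set.mem_compl_iff, Set.mem_inter_iff,
      Set.mem_iUnion, Set.mem_singleton_iff, exists_prop]
    tauto
  rw [he]
  exact (((meas_coord _ _).inter (meas_coord _ _)).inter (meas_coord _ _)).compl.union
    (MeasurableSet.iUnion (fun u => MeasurableSet.iUnion (fun _ =>
      (meas_coord _ _).inter (meas_coord _ _))))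

lemma meas_Fy (y : ℕ → ℕ) : MeasurableSet[borel (ℕ → ℕ)] (Fy y) := by
  letI : MeasurableSpace (ℕ → ℕ) := borel (ℕ → ℕ)
  have he : Fy y = (⋃ (k : ℕ), ⋂ (n : ℕ) (_ : k ≤ n), {x : ℕ → ℕ | goodAt x n}) ∩
      ⋂ (n : ℕ), ⋃ (u : ℕ), ({x | IsMarker x u} ∩
        {x | {v | v < u ∧ IsMarker x v}.ncard = n} ∩
        {x : ℕ → ℕ | x (u+2) ∈ ({y n} : Set ℕ)}) := by
    ext x
    simp only [Fy, mem_setOf_eq, Set.mem_inter_iff, Set.mem_iUnion, Set.mem_iInter,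
      Set.mem_singleton_iff, NthMarker, exists_prop]
  rw [he]
  refine MeasurableSet.inter ?_ ?_
  · exact MeasurableSet.iUnion (fun k => MeasurableSet.iInter (fun n =>
      MeasurableSet.iInter (fun _ => meas_good n)))
  · exact MeasurableSet.iInter (fun n => MeasurableSet.iUnion (fun u =>
      ((meas_marker u).inter (meas_count u n)).inter (meas_coord _ _)))



section Construction

variable (y xF a : ℕ → ℕ)

def rseq : ℕ → ℕ
  | 0 => 0
  | j+1 =>
      let m := rseq j + y j + 4
      max (a (m+1) + 3) ((Finset.Ico (a m) (a (m+1))).sup (fun i => i + xF i) + 1)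

def mseq (j : ℕ) : ℕ := rseq y xF a j + y j + 4

lemma rseq_zero : rseq y xF a 0 = 0 := rfl

lemma rseq_succ (j : ℕ) : rseq y xF a (j+1) =
    max (a (mseq y xF a j + 1) + 3)
      ((Finset.Ico (a (mseq y xF a j)) (a (mseq y xF a j + 1))).sup (fun i => i + xF i) + 1) :=
  rfl

lemma stage1 (ha : StrictMono a) (j : ℕ) :
    rseq y xF a j + y j + 4 ≤ a (mseq y xF a j) := by
  unfold mseq
  exact ha.le_apply

lemma stage2 (ha : StrictMono a) (j : ℕ) :
    a (mseq y xF a j) + 1 ≤ a (mseq y xF a j + 1) :=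
  ha (Nat.lt_succ_self _)

lemma stage3 (j : ℕ) : a (mseq y xF a j + 1) + 3 ≤ rseq y xF a (j+1) := by
  rw [rseq_succ]; exact le_max_left _ _

lemma stage4 (j : ℕ) (i : ℕ) (h1 : a (mseq y xF a j) ≤ i) (h2 : i < a (mseq y xF a j + 1)) :
    i + xF i < rseq y xF a (j+1) := by
  have hle : i + xF i ≤ (Finset.Ico (a (mseq y xF a j)) (a (mseq y xF a j + 1))).sup
      (fun i => i + xF i) :=
    Finset.le_sup (f := fun i => i + xF i) (Finset.mem_Ico.2 ⟨h1, h2⟩)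
  have := le_max_right (a (mseq y xF a j + 1) + 3)
    ((Finset.Ico (a (mseq y xF a j)) (a (mseq y xF a j + 1))).sup (fun i => i + xF i) + 1)
  rw [rseq_succ]
  omega

lemma rseq_gap (ha : StrictMono a) (j : ℕ) :
    rseq y xF a j + y j + 8 ≤ rseq y xF a (j+1) := by
  have s1 := stage1 y xF a ha j
  have s2 := stage2 y xF a ha j
  have s3 := stage3 y xF a j
  omega

lemma rseq_mono (ha : StrictMono a) : StrictMono (rseq y xF a) :=
  strictMono_nat_of_lt_succ (fun j => by have := rseq_gap y xF a ha j; omega)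

def Jidx (i : ℕ) : ℕ := Nat.findGreatest (fun j => rseq y xF a j ≤ i) i

lemma J_le (i : ℕ) : rseq y xF a (Jidx y xF a i) ≤ i :=
  Nat.findGreatest_spec (P := fun j => rseq y xF a j ≤ i) (Nat.zero_le i)
    (by show rseq y xF a 0 ≤ i; rw [rseq_zero]; exact Nat.zero_le i)

lemma J_lt (ha : StrictMono a) (i : ℕ) : i < rseq y xF a (Jidx y xF a i + 1) := by
  by_contra h
  push_neg at h
  have hge : Jidx y xF a i + 1 ≤ i := le_trans ((rseq_mono y xF a ha).le_apply) h
  exact Nat.findGreatest_is_greatest (Nat.lt_succ_self _) hge h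

lemma J_eq (ha : StrictMono a) {i j : ℕ} (h1 : rseq y xF a j ≤ i)
    (h2 : i < rseq y xF a (j+1)) : Jidx y xF a i = j := by
  have hm := rseq_mono y xF a ha
  have l1 := J_le y xF a i
  have l2 := J_lt y xF a ha i
  rcases lt_trichotomy (Jidx y xF a i) j with h | h | h
  · have : rseq y xF a (Jidx y xF a i + 1) ≤ rseq y xF a j := hm.monotone (by omega)
    omega
  · exact h
  · have : rseq y xF a (j+1) ≤ rseq y xF a (Jidx y xF a i) := hm.monotone (by omega)
    omega

def Vval (j : ℕ) : ℕ := a (mseq y xF a j + 1) + 3 - a (mseq y xF a j)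

def xcon : ℕ → ℕ := fun i =>
  if i = rseq y xF a (Jidx y xF a i) then 1
  else if i = rseq y xF a (Jidx y xF a i) + 1 then 2
  else if i = rseq y xF a (Jidx y xF a i) + 2 then y (Jidx y xF a i)
  else if i + 1 = a (mseq y xF a (Jidx y xF a i)) then Vval y xF a (Jidx y xF a i)
  else if a (mseq y xF a (Jidx y xF a i)) ≤ i ∧ i < a (mseq y xF a (Jidx y xF a i) + 1)
    then xF i
  else 0

lemma Vval_ge (ha : StrictMono a) (j : ℕ) : 4 ≤ Vval y xF a j := by
  have := stage2 y xF a ha j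
  unfold Vval
  omega

lemma xcon_r (ha : StrictMono a) (j : ℕ) : xcon y xF a (rseq y xF a j) = 1 := by
  have hJ : Jidx y xF a (rseq y xF a j) = j :=
    J_eq y xF a ha le_rfl (by have := rseq_gap y xF a ha j; omega)
  simp only [xcon]
  rw [hJ, if_pos rfl]

lemma xcon_r1 (ha : StrictMono a) (j : ℕ) : xcon y xF a (rseq y xF a j + 1) = 2 := by
  have hJ : Jidx y xF a (rseq y xF a j + 1) = j :=
    J_eq y xF a ha (by omega) (by have := rseq_gap y xF a ha j; omega)
  simp only [xcon]
  rw [hJ, if_neg (by omega), if_pos rfl]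

lemma xcon_r2 (ha : StrictMono a) (j : ℕ) : xcon y xF a (rseq y xF a j + 2) = y j := by
  have hJ : Jidx y xF a (rseq y xF a j + 2) = j :=
    J_eq y xF a ha (by omega) (by have := rseq_gap y xF a ha j; omega)
  simp only [xcon]
  rw [hJ, if_neg (by omega), if_neg (by omega), if_pos rfl]

lemma xcon_c (ha : StrictMono a) (j : ℕ) :
    xcon y xF a (a (mseq y xF a j) - 1) = Vval y xF a j := by
  have s1 := stage1 y xF a ha j
  have s2 := stage2 y xF a ha j
  have s3 := stage3 y xF a j
  have hJ : Jidx y xF a (a (mseq y xF a j) - 1) = j :=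
    J_eq y xF a ha (by omega) (by omega)
  simp only [xcon]
  rw [hJ, if_neg (by omega), if_neg (by omega), if_neg (by omega), if_pos (by omega)]

lemma xcon_copy (ha : StrictMono a) (j : ℕ) (i : ℕ) (h1 : a (mseq y xF a j) ≤ i)
    (h2 : i < a (mseq y xF a j + 1)) : xcon y xF a i = xF i := by
  have s1 := stage1 y xF a ha j
  have s3 := stage3 y xF a j
  have hJ : Jidx y xF a i = j := J_eq y xF a ha (by omega) (by omega)
  simp only [xcon]
  rw [hJ, if_neg (by omega), if_neg (by omega), if_neg (by omega), if_neg (by omega),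
    if_pos ⟨h1, h2⟩]

lemma xcon_cases (i : ℕ) :
    i = rseq y xF a (Jidx y xF a i) ∨ i = rseq y xF a (Jidx y xF a i) + 1 ∨
    i = rseq y xF a (Jidx y xF a i) + 2 ∨ i + 1 = a (mseq y xF a (Jidx y xF a i)) ∨
    (a (mseq y xF a (Jidx y xF a i)) ≤ i ∧ i < a (mseq y xF a (Jidx y xF a i) + 1)) ∨
    xcon y xF a i = 0 := by
  simp only [xcon]
  split_ifs <;> tauto

lemma xcon_reach (ha : StrictMono a) (v : ℕ) (h2 : 2 ≤ xcon y xF a v) :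
    v + xcon y xF a v < rseq y xF a (Jidx y xF a v + 1) := by
  have s1 := stage1 y xF a ha (Jidx y xF a v)
  have s2 := stage2 y xF a ha (Jidx y xF a v)
  have s3 := stage3 y xF a (Jidx y xF a v)
  have sg := rseq_gap y xF a ha (Jidx y xF a v)
  rcases xcon_cases y xF a v with hc | hc | hc | hc | hc | hc
  · have h := xcon_r y xF a ha (Jidx y xF a v)
    rw [← hc] at h
    omega
  · have h := xcon_r1 y xF a ha (Jidx y xF a v)
    rw [← hc] at h
    omega
  · have h := xcon_r2 y xF a ha (Jidx y xF a v)
    rw [← hc] at h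
    omega
  · have h := xcon_c y xF a ha (Jidx y xF a v)
    have hveq : v = a (mseq y xF a (Jidx y xF a v)) - 1 := by omega
    rw [← hveq] at h
    rw [h]
    unfold Vval
    omega
  · have h := xcon_copy y xF a ha (Jidx y xF a v) v hc.1 hc.2
    have := stage4 y xF a (Jidx y xF a v) v hc.1 hc.2
    rw [h]
    omega
  · omega

lemma xcon_good (ha : StrictMono a) (n : ℕ) : goodAt (xcon y xF a) n := by
  by_cases hp : xcon y xF a n = 0 ∧ xcon y xF a (n+1) = 1 ∧ xcon y xF a (n+2) = 0
  · right
    have s1 := stage1 y xF a ha (Jidx y xF a (n+1))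
    have s2 := stage2 y xF a ha (Jidx y xF a (n+1))
    have s3 := stage3 y xF a (Jidx y xF a (n+1))
    obtain ⟨hp1, hp2, hp3⟩ := hp
    rcases xcon_cases y xF a (n+1) with hc | hc | hc | hc | hc | hc
    · exfalso
      have h := xcon_r1 y xF a ha (Jidx y xF a (n+1))
      have he : n + 2 = rseq y xF a (Jidx y xF a (n+1)) + 1 := by omega
      rw [← he] at h
      omega
    · exfalso
      have h := xcon_r1 y xF a ha (Jidx y xF a (n+1))
      rw [← hc] at h
      omega
    · exfalso
      have h := xcon_r1 y xF a ha (Jidx y xF a (n+1))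
      have he : n = rseq y xF a (Jidx y xF a (n+1)) + 1 := by omega
      rw [← he] at h
      omega
    · exfalso
      have h := xcon_c y xF a ha (Jidx y xF a (n+1))
      have hveq : n + 1 = a (mseq y xF a (Jidx y xF a (n+1))) - 1 := by omega
      rw [← hveq] at h
      have hV := Vval_ge y xF a ha (Jidx y xF a (n+1))
      omega
    · refine ⟨a (mseq y xF a (Jidx y xF a (n+1))) - 1, by omega, ?_⟩
      have h := xcon_c y xF a ha (Jidx y xF a (n+1))
      rw [h]
      have hV := Vval_ge y xF a ha (Jidx y xF a (n+1))
      unfold Vval at hV ⊢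
      omega
    · omega
  · left
    exact hp

lemma xcon_marker (ha : StrictMono a) (n : ℕ) :
    IsMarker (xcon y xF a) (rseq y xF a n) := by
  refine ⟨xcon_r y xF a ha n, ?_⟩
  rintro v hv ⟨h2, h3⟩
  have hr := xcon_reach y xF a ha v h2
  have hm := rseq_mono y xF a ha
  have hJv : Jidx y xF a v + 1 ≤ n := by
    by_contra h
    push_neg at h
    have h1 : rseq y xF a n ≤ rseq y xF a (Jidx y xF a v) := hm.monotone (by omega)
    have h2 := J_le y xF a v
    omega
  have : rseq y xF a (Jidx y xF a v + 1) ≤ rseq y xF a n := hm.monotone hJv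
  omega

lemma marker_eq (ha : StrictMono a) (u : ℕ) (h : IsMarker (xcon y xF a) u) :
    u = rseq y xF a (Jidx y xF a u) := by
  have s1 := stage1 y xF a ha (Jidx y xF a u)
  have s2 := stage2 y xF a ha (Jidx y xF a u)
  have s3 := stage3 y xF a (Jidx y xF a u)
  have hV := Vval_ge y xF a ha (Jidx y xF a u)
  have h1 := h.1
  rcases xcon_cases y xF a u with hc | hc | hc | hc | hc | hc
  · exact hc
  · exfalso
    have hx := xcon_r1 y xF a ha (Jidx y xF a u)
    rw [← hc] at hx
    omega
  · exfalso
    refine h.2 (rseq y xF a (Jidx y xF a u) + 1) (by omega) ⟨?_, ?_⟩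
    · rw [xcon_r1 y xF a ha (Jidx y xF a u)]
    · rw [xcon_r1 y xF a ha (Jidx y xF a u)]
      omega
  · exfalso
    have hx := xcon_c y xF a ha (Jidx y xF a u)
    have hveq : u = a (mseq y xF a (Jidx y xF a u)) - 1 := by omega
    rw [← hveq] at hx
    omega
  · exfalso
    refine h.2 (a (mseq y xF a (Jidx y xF a u)) - 1) (by omega) ⟨?_, ?_⟩
    · rw [xcon_c y xF a ha (Jidx y xF a u)]
      omega
    · rw [xcon_c y xF a ha (Jidx y xF a u)]
      unfold Vval
      omega
  · exfalso
    omega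

lemma markers_set (ha : StrictMono a) (n : ℕ) :
    {v | v < rseq y xF a n ∧ IsMarker (xcon y xF a) v} = rseq y xF a '' Set.Iio n := by
  have hm := rseq_mono y xF a ha
  ext v
  constructor
  · rintro ⟨hlt, hmk⟩
    have he := marker_eq y xF a ha v hmk
    refine ⟨Jidx y xF a v, ?_, he.symm⟩
    have : rseq y xF a (Jidx y xF a v) < rseq y xF a n := by rw [← he]; exact hlt
    exact hm.lt_iff_lt.1 this
  · rintro ⟨i, hi, rfl⟩
    exact ⟨hm hi, xcon_marker y xF a ha i⟩

lemma xcon_nth (ha : StrictMono a) (n : ℕ) :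
    NthMarker (xcon y xF a) n (rseq y xF a n) := by
  refine ⟨xcon_marker y xF a ha n, ?_⟩
  rw [markers_set y xF a ha n,
    Set.ncard_image_of_injective _ (rseq_mono y xF a ha).injective]
  have : (Set.Iio n) = ↑(Finset.range n) := by ext; simp
  rw [this, Set.ncard_coe_finset, Finset.card_range]

lemma xcon_mem (ha : StrictMono a) : xcon y xF a ∈ Fy y :=
  ⟨⟨0, fun n _ => xcon_good y xF a ha n⟩,
    fun n => ⟨rseq y xF a n, xcon_nth y xF a ha n, xcon_r2 y xF a ha n⟩⟩

end Construction

lemma not_Mminus (y : ℕ → ℕ) : ¬ Mminus (Fy y) := by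
  rintro ⟨xF, a, _, hmono, hsub⟩
  have hx := xcon_mem y xF a hmono
  have hev := hsub hx
  simp only [mem_setOf_eq] at hev
  obtain ⟨N, hN⟩ := eventually_atTop.1 hev
  have hm : N ≤ mseq y xF a N := by
    have : N ≤ rseq y xF a N := (rseq_mono y xF a hmono).le_apply
    unfold mseq
    omega
  obtain ⟨i, h1, h2, h3⟩ := hN (mseq y xF a N) hm
  exact h3 (xcon_copy y xF a hmono N i h1 h2)

lemma Fy_nonempty (y : ℕ → ℕ) : (Fy y).Nonempty :=
  ⟨xcon y (fun _ => 0) id, xcon_mem y (fun _ => 0) id strictMono_id⟩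



lemma meagre_singleton (x : ℕ → ℕ) : IsMeagre ({x} : Set (ℕ → ℕ)) := by
  have hnwd : IsNowhereDense ({x} : Set (ℕ → ℕ)) := by
    rw [isClosed_singleton.isNowhereDense_iff]
    rw [Set.eq_empty_iff_forall_notMem]
    intro z hz
    have hzx : z ∈ ({x} : Set (ℕ → ℕ)) := interior_subset hz
    rw [Set.mem_singleton_iff] at hzx
    subst hzx
    set f : ℕ → ℕ → ℕ := fun j i => if i < j then z i else z i + 1 with hf
    have htend : Tendsto f atTop (nhds z) := by
      rw [tendsto_pi_nhds]
      intro i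
      apply Tendsto.congr' _ tendsto_const_nhds
      filter_upwards [eventually_gt_atTop i] with j hj
      simp [hf, hj]
    have hev : f ⁻¹' interior {z} ∈ atTop := htend (isOpen_interior.mem_nhds hz)
    obtain ⟨j, hj⟩ := Filter.nonempty_of_mem hev
    have hfj : f j ∈ ({z} : Set (ℕ → ℕ)) := interior_subset hj
    rw [Set.mem_singleton_iff] at hfj
    have : f j j = z j := by rw [hfj]
    simp [hf] at this
  exact isMeagre_iff_countable_union_isNowhereDense.2
    ⟨{{x}}, by simpa using hnwd, Set.countable_singleton _, by simp⟩

lemma not_meagre_univ : ¬ IsMeagre (Set.univ : Set (ℕ → ℕ)) := by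
  intro h
  rw [IsMeagre, Set.compl_univ] at h
  have hd : Dense (∅ : Set (ℕ → ℕ)) := dense_of_mem_residual h
  obtain ⟨z, hz⟩ := hd.nonempty
  exact hz

lemma addMeager_le : addMeager ≤ Cardinal.mk (ℕ → ℕ) := by
  apply csInf_le'
  refine ⟨Set.range (fun x : ℕ → ℕ => ({x} : Set (ℕ → ℕ))), ?_, ?_, ?_⟩
  · exact Cardinal.mk_range_eq _ (fun x y h => Set.singleton_injective h)
  · rintro s ⟨x, rfl⟩
    exact meagre_singleton x
  · rw [Set.sUnion_range]
    rw [Set.iUnion_of_singleton]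
    exact not_meagre_univ

end Stmt6Aux

theorem stmt6 :
    ∃ M : Set (Set (ℕ → ℕ)),
      Cardinal.mk M = addMeager ∧
      (∀ s ∈ M, @MeasurableSet (ℕ → ℕ) (borel (ℕ → ℕ)) s ∧ IsMeagre s ∧ ¬ Mminus s) ∧
      (∀ s ∈ M, ∀ t ∈ M, s ≠ t → s ∩ t = ∅) := by
  classical
  obtain ⟨T, hT⟩ := Cardinal.le_mk_iff_exists_set.mp Stmt6Aux.addMeager_le
  have hinj : Set.InjOn Stmt6Aux.Fy T := by
    intro y1 _ y2 _ heq
    by_contra hne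
    obtain ⟨x, hx⟩ := Stmt6Aux.Fy_nonempty y1
    have hx2 : x ∈ Stmt6Aux.Fy y2 := heq ▸ hx
    have hd := Stmt6Aux.Fy_disjoint hne
    have : x ∈ (∅ : Set (ℕ → ℕ)) := hd ▸ (⟨hx, hx2⟩ : x ∈ Stmt6Aux.Fy y1 ∩ Stmt6Aux.Fy y2)
    exact this
  refine ⟨Stmt6Aux.Fy '' T, ?_, ?_, ?_⟩
  · rw [Cardinal.mk_image_eq_of_injOn _ _ hinj, hT]
  · rintro s ⟨y, _, rfl⟩
    exact ⟨Stmt6Aux.meas_Fy y, Stmt6Aux.meagre_Fy y, Stmt6Aux.not_Mminus y⟩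
  · rintro s ⟨y1, _, rfl⟩ t ⟨y2, _, rfl⟩ hne
    have hyne : y1 ≠ y2 := fun h => hne (by rw [h])
    exact Stmt6Aux.Fy_disjoint hyne
end

section
/- There exists a family F ⊆ fN(Fin) of cardinality at most 𝔡 such that every member of fN(Fin) is contained in some member of F; that is, cof(fN(Fin)) ≤ 𝔡. -/
open Filter Set

/-- The dominating number `𝔡`. -/
noncomputable def frakd : Cardinal :=
  sInf {c : Cardinal |
    ∃ D : Set (ℕ → ℕ), Cardinal.mk D = c ∧
      ∀ x : ℕ → ℕ, ∃ f ∈ D, ∀ᶠ n in Filter.atTop, x n < f n}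

theorem stmt8 :
    ∃ Fam : Set (Set (ℕ → ℕ)),
      Cardinal.mk Fam ≤ frakd ∧
      (∀ s ∈ Fam, fNFin s) ∧
      (∀ A : Set (ℕ → ℕ), fNFin A → ∃ B ∈ Fam, A ⊆ B) := by
  have hne : {c : Cardinal | ∃ D : Set (ℕ → ℕ), Cardinal.mk D = c ∧
      ∀ x : ℕ → ℕ, ∃ f ∈ D, ∀ᶠ n in Filter.atTop, x n < f n}.Nonempty := by
    refine ⟨Cardinal.mk (Set.univ : Set (ℕ → ℕ)), Set.univ, rfl, ?_⟩
    intro x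
    exact ⟨fun n => x n + 1, Set.mem_univ _,
      Filter.Eventually.of_forall fun n => Nat.lt_succ_self _⟩
  obtain ⟨D, hD, hdom⟩ := csInf_mem hne
  set B : (ℕ → ℕ) → Set (ℕ → ℕ) :=
    fun f => {x | ∃ᶠ n in Filter.atTop, ∀ i : Fin n, x i < f n} with hBdef
  have hBfN : ∀ f, fNFin (B f) := by
    intro f
    refine ⟨fun n => {σ : Fin n → ℕ | ∀ i, σ i < f n}, ?_, ?_⟩
    · intro n
      have hsub : {σ : Fin n → ℕ | ∀ i, σ i < f n} ⊆
          Set.pi Set.univ (fun _ : Fin n => Set.Iio (f n)) := by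
        intro σ hσ i _; exact hσ i
      exact (Set.Finite.pi (fun _ => Set.finite_Iio _)).subset hsub
    · intro x hx; exact hx
  refine ⟨B '' D, ?_, ?_, ?_⟩
  · calc Cardinal.mk (B '' D) ≤ Cardinal.mk D := Cardinal.mk_image_le
      _ = frakd := hD
  · rintro s ⟨f, _, rfl⟩; exact hBfN f
  · intro A hA
    obtain ⟨S, hSfin, hAsub⟩ := hA
    set g : ℕ → ℕ := fun n => ((hSfin n).toFinset.sup fun σ => Finset.univ.sup σ) + 1 with hg
    obtain ⟨f, hfD, hgf⟩ := hdom g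
    refine ⟨B f, Set.mem_image_of_mem _ hfD, ?_⟩
    intro x hx
    have h1 := hAsub hx
    have h3 := h1.and_eventually hgf
    refine h3.mono ?_
    rintro n ⟨hmem, hlt⟩ i
    have h2 : x i ≤ (hSfin n).toFinset.sup fun σ => Finset.univ.sup σ := by
      have hmem' : (fun j : Fin n => x j) ∈ (hSfin n).toFinset :=
        (hSfin n).mem_toFinset.mpr hmem
      calc x i ≤ Finset.univ.sup (fun j : Fin n => x j) :=
            Finset.le_sup (f := fun j : Fin n => x j) (Finset.mem_univ i)
        _ ≤ _ := Finset.le_sup hmem'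
    calc x i < g n := Nat.lt_succ_of_le h2
      _ < f n := hlt
end

section
/- For every cardinal κ < 𝔟 and every family (F_α)_{α<κ} of sets in fN(Fin), the union ⋃_{α<κ} F_α belongs to fN(Fin); that is, add(fN(Fin)) ≥ 𝔟. -/
open Filter Set

/-- The bounding number `𝔟`. -/
noncomputable def frakb : Cardinal :=
  sInf {c : Cardinal |
    ∃ B : Set (ℕ → ℕ), Cardinal.mk B = c ∧
      ∀ x : ℕ → ℕ, ∃ f ∈ B, ∃ᶠ n in Filter.atTop, x n < f n}

/-!
A set is in `fN(Fin)` exactly when it is covered by `{x : x↾n ≤ g n pointwise for infinitely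
many n}` for a single `g : ℕ → ℕ` (bound the finitely many patterns of length `n` by `g n`,
or conversely take all patterns bounded by `g n`). Fewer than `𝔟` such bounds `g_α` are
eventually dominated by one `g`, and then `g` witnesses that the union is in `fN(Fin)`.
-/

theorem Set.Finite.exists_forall_apply_le {α β : Type*} [Finite α] [SemilatticeSup β]
    [Nonempty β] {S : Set (α → β)} (hS : S.Finite) :
    ∃ b, ∀ σ ∈ S, ∀ k, σ k ≤ b := by
  obtain ⟨u, hu⟩ := hS.bddAbove
  obtain ⟨b, hb⟩ := (finite_range u).bddAbove
  exact ⟨b, fun σ hσ k => (hu hσ k).trans (hb (mem_range_self k))⟩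

theorem fNFin_iff_exists_bound {F : Set (ℕ → ℕ)} :
    fNFin F ↔ ∃ g : ℕ → ℕ, F ⊆ {x | ∃ᶠ n in atTop, ∀ k : Fin n, x k ≤ g n} := by
  constructor
  · rintro ⟨S, hSfin, hFS⟩
    choose g hg using fun n => (hSfin n).exists_forall_apply_le
    exact ⟨g, fun x hx => (hFS hx).mono fun n hn k => hg n _ hn k⟩
  · rintro ⟨g, hFg⟩
    exact ⟨fun n => Iic fun _ => g n, fun n => finite_Iic _, fun x hx => hFg hx⟩

theorem exists_eventually_le_of_mk_lt_frakb {ι : Type} (H : ι → ℕ → ℕ)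
    (hι : Cardinal.mk ι < frakb) : ∃ g : ℕ → ℕ, ∀ i, ∀ᶠ n in atTop, H i n ≤ g n := by
  by_contra! hunbdd
  have hfrakb_le : frakb ≤ Cardinal.mk (range H) := by
    refine csInf_le' ⟨range H, rfl, fun g => ?_⟩
    obtain ⟨i, hi⟩ := hunbdd g
    exact ⟨H i, mem_range_self i, hi⟩
  exact (hfrakb_le.trans Cardinal.mk_range_le).not_gt hι

theorem stmt9 (κ : Cardinal) (hκ : κ < frakb) (ι : Type) (hι : Cardinal.mk ι = κ)
    (F : ι → Set (ℕ → ℕ)) (hF : ∀ i, fNFin (F i)) :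
    fNFin (⋃ i, F i) := by
  choose H hH using fun i => fNFin_iff_exists_bound.1 (hF i)
  obtain ⟨g, hg⟩ := exists_eventually_le_of_mk_lt_frakb H (hι ▸ hκ)
  refine fNFin_iff_exists_bound.2 ⟨g, ?_⟩
  rintro x ⟨_, ⟨i, rfl⟩, hx⟩
  exact ((hH i hx).and_eventually (hg i)).mono fun n ⟨hxH, hHg⟩ k => (hxH k).trans hHg
end

section
/- Let h : ℕ → ℕ satisfy h(n) ≥ 1 for all n, limsup_n h(n) = ∞, and h(a+b) ≥ h(a)·h(b) for all a, b ∈ ℕ. Then fE(h) ⊆ fN(h). -/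
open Filter Set

/-!
For fixed `N`, the points of an `fE(h)` set that agree with a given prefix on `[0, a N)` and have
every later block `x↾I_n` in `J_n` are covered, for each `r`, by the cylinders of their initial
segments of length `a (N + r)`. These are at most `∏_{t<r} |J_{N+t}|` many, and
supermultiplicativity gives `h (a (N + r)) ≥ ∏_{t<r} h |I_{N+t}|`, so their total weight is at most
`∏_{t<r} |J_{N+t}| / h |I_{N+t}| ≤ 2⁻ʳ` once the summable ratios are below `1/2`. A countable union
of such sets is covered with weights summing below any `ε`, and cylinders of tiny weight, which
exist because `limsup h = ∞`, pad the cover to an `ℕ`-indexed sequence.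
-/
open scoped ENNReal

noncomputable def cylinderWeight (h : ℕ → ℕ) (S : Set (List ℕ)) : ℝ≥0∞ :=
  ∑' σ : S, ((h (σ : List ℕ).length : ℝ≥0∞))⁻¹

def HasSmallCovers (h : ℕ → ℕ) (F : Set (ℕ → ℕ)) : Prop :=
  ∀ ε : ℝ≥0∞, 0 < ε → ∃ S : Set (List ℕ), cylinderWeight h S < ε ∧ F ⊆ ⋃ σ ∈ S, cylinder σ

section SmallCovers

variable {h : ℕ → ℕ}

lemma cylinderWeight_eq_of_length_eq {S : Set (List ℕ)} {m : ℕ} (hS : ∀ σ ∈ S, σ.length = m) :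
    cylinderWeight h S = S.encard * ((h m : ℝ≥0∞))⁻¹ := by
  rw [cylinderWeight, tsum_congr fun σ : S => by rw [hS σ σ.2], ENNReal.tsum_const]
  rfl

lemma HasSmallCovers.mono {F G : Set (ℕ → ℕ)} (hG : HasSmallCovers h G) (hFG : F ⊆ G) :
    HasSmallCovers h F := fun ε hε =>
  let ⟨S, hS, hGS⟩ := hG ε hε
  ⟨S, hS, hFG.trans hGS⟩

lemma HasSmallCovers.iUnion {ι : Type*} [Countable ι] {F : ι → Set (ℕ → ℕ)}
    (hF : ∀ i, HasSmallCovers h (F i)) : HasSmallCovers h (⋃ i, F i) := by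
  intro ε hε
  obtain ⟨δ, hδ, hδε⟩ := ENNReal.exists_pos_sum_of_countable' hε.ne' ι
  choose S hS hFS using fun i => hF i (δ i) (hδ i)
  refine ⟨⋃ i, S i, ?_, ?_⟩
  · calc cylinderWeight h (⋃ i, S i) ≤ ∑' i, cylinderWeight h (S i) :=
          ENNReal.tsum_iUnion_le_tsum (fun σ : List ℕ => ((h σ.length : ℝ≥0∞))⁻¹) S
      _ ≤ ∑' i, δ i := ENNReal.tsum_le_tsum fun i => (hS i).le
      _ < ε := hδε
  · refine iUnion_subset fun i => (hFS i).trans ?_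
    exact biUnion_mono (subset_iUnion S i) fun _ _ => subset_rfl

lemma exists_tsum_inv_lt (hlim : LimsupInfty h) {δ : ℝ≥0∞} (hδ : δ ≠ 0) :
    ∃ L : ℕ → ℕ, ∑' n, ((h (L n) : ℝ≥0∞))⁻¹ < δ := by
  obtain ⟨δ', hδ', hδ'δ⟩ := ENNReal.exists_pos_sum_of_countable' hδ ℕ
  choose m hm using fun n => ENNReal.exists_inv_nat_lt (hδ' n).ne'
  choose L hL using fun n => (hlim (m n)).exists
  refine ⟨L, lt_of_le_of_lt (ENNReal.tsum_le_tsum fun n => ?_) hδ'δ⟩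
  exact (ENNReal.inv_le_inv.2 (by exact_mod_cast hL n)).trans (hm n).le

lemma summable_and_tsum_lt_of_tsum_inv_lt {σ : ℕ → List ℕ} {ε : ℝ}
    (hσ : ∑' n, ((h (σ n).length : ℝ≥0∞))⁻¹ < ENNReal.ofReal ε) :
    Summable (fun n => (1 : ℝ) / (h (σ n).length : ℝ)) ∧
      (∑' n, (1 : ℝ) / (h (σ n).length : ℝ)) < ε := by
  have htoReal : (fun n => (1 : ℝ) / (h (σ n).length : ℝ)) =
      fun n => (((h (σ n).length : ℝ≥0∞))⁻¹).toReal := by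
    simp
  rw [htoReal, ← ENNReal.tsum_toReal_eq fun n => ENNReal.ne_top_of_tsum_ne_top hσ.ne_top n]
  exact ⟨ENNReal.summable_toReal hσ.ne_top, ENNReal.toReal_lt_of_lt_ofReal hσ⟩

lemma HasSmallCovers.fN (hlim : LimsupInfty h) {F : Set (ℕ → ℕ)} (hF : HasSmallCovers h F) :
    fN h F := by
  intro ε hε
  have hε2 : 0 < ENNReal.ofReal ε / 2 := by simpa using hε
  obtain ⟨S, hS, hFS⟩ := hF _ hε2
  obtain ⟨L, hL⟩ := exists_tsum_inv_lt hlim hε2.ne'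
  obtain ⟨e⟩ := nonempty_equiv_of_countable (α := ℕ) (β := S ⊕ ℕ)
  let τ : S ⊕ ℕ → List ℕ := Sum.elim Subtype.val fun k => List.replicate (L k) 0
  have hweight : ∑' n, ((h (τ (e n)).length : ℝ≥0∞))⁻¹ < ENNReal.ofReal ε :=
    calc ∑' n, ((h (τ (e n)).length : ℝ≥0∞))⁻¹ = ∑' j, ((h (τ j).length : ℝ≥0∞))⁻¹ :=
          e.tsum_eq fun j => ((h (τ j).length : ℝ≥0∞))⁻¹
      _ = cylinderWeight h S + ∑' k, ((h (L k) : ℝ≥0∞))⁻¹ := by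
          rw [ENNReal.summable.tsum_sum ENNReal.summable]
          simp [τ, cylinderWeight]
      _ < ENNReal.ofReal ε / 2 + ENNReal.ofReal ε / 2 := ENNReal.add_lt_add hS hL
      _ = ENNReal.ofReal ε := ENNReal.add_halves _
  obtain ⟨hsum, hlt⟩ := summable_and_tsum_lt_of_tsum_inv_lt hweight
  refine ⟨fun n => τ (e n), hsum, hlt, fun x hx => ?_⟩
  obtain ⟨σ, hσS, hxσ⟩ := mem_iUnion₂.1 (hFS hx)
  exact mem_iUnion.2 ⟨e.symm (Sum.inl ⟨σ, hσS⟩), by simpa [τ] using hxσ⟩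

end SmallCovers

lemma Set.encard_image_le_encard_image {α β γ : Type*} [Nonempty α] {f : α → β} {g : α → γ}
    {A : Set α} (hfg : ∀ x ∈ A, ∀ y ∈ A, g x = g y → f x = f y) :
    (f '' A).encard ≤ (g '' A).encard := by
  have hA : f '' A = (f ∘ Function.invFunOn g A) '' (g '' A) := by
    rw [image_image]
    refine image_congr fun x hx => hfg x hx _ ?_ ?_
    · exact Function.invFunOn_mem ⟨x, hx, rfl⟩
    · exact (Function.invFunOn_eq ⟨x, hx, rfl⟩).symm
  exact hA ▸ encard_image_le _ _

lemma prod_le_apply_add_sum {h : ℕ → ℕ} (h1 : ∀ n, 1 ≤ h n)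
    (hsm : ∀ a b : ℕ, h a * h b ≤ h (a + b)) {ι : Type*} (s : Finset ι) (d : ι → ℕ) (m : ℕ) :
    ∏ i ∈ s, h (d i) ≤ h (m + ∑ i ∈ s, d i) := by
  classical
  induction s using Finset.induction_on with
  | empty => simpa using h1 m
  | insert j s hj ih =>
    rw [Finset.prod_insert hj, Finset.sum_insert hj]
    calc h (d j) * ∏ i ∈ s, h (d i) ≤ h (d j) * h (m + ∑ i ∈ s, d i) := Nat.mul_le_mul_left _ ih
      _ ≤ h (m + (d j + ∑ i ∈ s, d i)) := by
          convert hsm (d j) (m + ∑ i ∈ s, d i) using 2; ring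

lemma exists_mem_Ico_block {a : ℕ → ℕ} (ha : Monotone a) {i N M : ℕ} (hN : a N ≤ i)
    (hM : i < a M) : ∃ n, N ≤ n ∧ n < M ∧ a n ≤ i ∧ i < a (n + 1) := by
  induction M with
  | zero => exact absurd (hN.trans_lt hM) (not_lt.2 (ha N.zero_le))
  | succ M ih =>
    by_cases hMi : a M ≤ i
    · refine ⟨M, ?_, M.lt_succ_self, hMi, hM⟩
      by_contra! hMN
      exact absurd (hN.trans_lt hM) (not_lt.2 (ha hMN))
    · obtain ⟨n, hNn, hnM, hn⟩ := ih (not_le.1 hMi)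
      exact ⟨n, hNn, hnM.trans M.lt_succ_self, hn⟩

lemma eq_of_restrIco_eq {a : ℕ → ℕ} (ha : Monotone a) {x y : ℕ → ℕ} {N r i : ℕ}
    (hpre : ∀ i < a N, x i = y i)
    (hblk : ∀ t < r,
      restrIco x (a (N + t)) (a (N + t + 1)) = restrIco y (a (N + t)) (a (N + t + 1)))
    (hi : i < a (N + r)) : x i = y i := by
  rcases lt_or_ge i (a N) with hiN | hiN
  · exact hpre i hiN
  obtain ⟨n, hNn, hnr, hni, hin⟩ := exists_mem_Ico_block ha hiN hi
  have := congrFun (hblk (n - N) (by omega)) i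
  rwa [Nat.add_sub_cancel' hNn, restrIco, restrIco, if_pos ⟨hni, hin⟩, if_pos ⟨hni, hin⟩] at this

def initSeg (x : ℕ → ℕ) (m : ℕ) : List ℕ := List.ofFn fun i : Fin m => x i

def blockSet (a : ℕ → ℕ) (J : ℕ → Set (ℕ → ℕ)) (N : ℕ) (τ : Fin (a N) → ℕ) (r : ℕ) :
    Set (ℕ → ℕ) :=
  {x | (∀ i : Fin (a N), x i = τ i) ∧ ∀ t < r, restrIco x (a (N + t)) (a (N + t + 1)) ∈ J (N + t)}

lemma length_initSeg (x : ℕ → ℕ) (m : ℕ) : (initSeg x m).length = m := List.length_ofFn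

lemma mem_cylinder_initSeg (x : ℕ → ℕ) (m : ℕ) : x ∈ cylinder (initSeg x m) :=
  fun i => (List.get_ofFn _ i).symm

section Blocks

variable {h a : ℕ → ℕ} {J : ℕ → Set (ℕ → ℕ)} {N : ℕ}

lemma encard_initSeg_image_blockSet_le (ha : Monotone a) (hfin : ∀ n, (J n).Finite)
    (τ : Fin (a N) → ℕ) (r : ℕ) :
    ((initSeg · (a (N + r))) '' blockSet a J N τ r).encard ≤
      ∏ t ∈ Finset.range r, (J (N + t)).ncard := by
  classical
  let blocks : (ℕ → ℕ) → Fin r → ℕ → ℕ := fun x t => restrIco x (a (N + t)) (a (N + t + 1))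
  let P := Fintype.piFinset fun t : Fin r => (hfin (N + t)).toFinset
  have hfactor : ∀ x ∈ blockSet a J N τ r, ∀ y ∈ blockSet a J N τ r,
      blocks x = blocks y → initSeg x (a (N + r)) = initSeg y (a (N + r)) := by
    intro x hx y hy hxy
    refine List.ofFn_inj.2 (funext fun i => eq_of_restrIco_eq ha ?_ ?_ i.2)
    · exact fun i hi => (hx.1 ⟨i, hi⟩).trans (hy.1 ⟨i, hi⟩).symm
    · exact fun t ht => congrFun hxy ⟨t, ht⟩
  have hmaps : blocks '' blockSet a J N τ r ⊆ P := by
    rintro _ ⟨x, hx, rfl⟩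
    simpa [P, blocks] using fun t : Fin r => hx.2 t t.2
  calc _ ≤ (blocks '' blockSet a J N τ r).encard := encard_image_le_encard_image hfactor
    _ ≤ (P : Set (Fin r → ℕ → ℕ)).encard := encard_le_encard hmaps
    _ = ∏ t ∈ Finset.range r, (J (N + t)).ncard := by
        rw [encard_coe_eq_coe_finsetCard, Fintype.card_piFinset,
          ← Fin.prod_univ_eq_prod_range (fun t => (J (N + t)).ncard)]
        simp [ncard_eq_toFinset_card _ (hfin _)]

lemma two_pow_mul_prod_ncard_le (h1 : ∀ n, 1 ≤ h n) (hsm : ∀ a b : ℕ, h a * h b ≤ h (a + b))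
    (ha : Monotone a) (hJ : ∀ n ≥ N, 2 * (J n).ncard ≤ h (a (n + 1) - a n)) (r : ℕ) :
    2 ^ r * ∏ t ∈ Finset.range r, (J (N + t)).ncard ≤ h (a (N + r)) := by
  have htele : ∑ t ∈ Finset.range r, (a (N + t + 1) - a (N + t)) = a (N + r) - a N :=
    Finset.sum_range_tsub (f := fun t => a (N + t)) (fun s t hst => ha (by omega)) r
  calc 2 ^ r * ∏ t ∈ Finset.range r, (J (N + t)).ncard
        = ∏ t ∈ Finset.range r, 2 * (J (N + t)).ncard := by
          rw [Finset.prod_mul_distrib, Finset.prod_const, Finset.card_range]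
    _ ≤ ∏ t ∈ Finset.range r, h (a (N + t + 1) - a (N + t)) :=
          Finset.prod_le_prod' fun t _ => hJ (N + t) (Nat.le_add_right N t)
    _ ≤ h (a N + ∑ t ∈ Finset.range r, (a (N + t + 1) - a (N + t))) :=
          prod_le_apply_add_sum h1 hsm _ _ _
    _ = h (a (N + r)) := by rw [htele, Nat.add_sub_cancel' (ha (Nat.le_add_right N r))]

lemma natCast_mul_inv_le_inv_two_pow {P H r : ℕ} (hPH : 2 ^ r * P ≤ H) :
    (P : ℝ≥0∞) * (H : ℝ≥0∞)⁻¹ ≤ 2⁻¹ ^ r := by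
  rcases Nat.eq_zero_or_pos P with rfl | hP
  · simp
  have hH : (H : ℝ≥0∞) ≠ 0 := by
    have : 0 < 2 ^ r * P := by positivity
    exact_mod_cast (this.trans_le hPH).ne'
  rw [ENNReal.mul_inv_le_iff hH (ENNReal.natCast_ne_top H), ← ENNReal.inv_pow]
  calc (P : ℝ≥0∞) = (2 ^ r)⁻¹ * (2 ^ r * P) :=
        (ENNReal.inv_mul_cancel_left (by positivity) (by simp)).symm
    _ ≤ (2 ^ r)⁻¹ * H := by gcongr; exact_mod_cast hPH

lemma exists_cover_blockSet (h1 : ∀ n, 1 ≤ h n) (hsm : ∀ a b : ℕ, h a * h b ≤ h (a + b))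
    (ha : Monotone a) (hfin : ∀ n, (J n).Finite)
    (hJ : ∀ n ≥ N, 2 * (J n).ncard ≤ h (a (n + 1) - a n)) (τ : Fin (a N) → ℕ) (r : ℕ) :
    ∃ S : Set (List ℕ), cylinderWeight h S ≤ 2⁻¹ ^ r ∧
      blockSet a J N τ r ⊆ ⋃ σ ∈ S, cylinder σ := by
  refine ⟨(initSeg · (a (N + r))) '' blockSet a J N τ r, ?_,
    fun x hx => mem_biUnion (mem_image_of_mem _ hx) (mem_cylinder_initSeg x _)⟩
  rw [cylinderWeight_eq_of_length_eq (m := a (N + r))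
    (by rintro _ ⟨x, -, rfl⟩; exact length_initSeg x _)]
  calc _ ≤ ((∏ t ∈ Finset.range r, (J (N + t)).ncard : ℕ) : ℝ≥0∞) *
        ((h (a (N + r)) : ℝ≥0∞))⁻¹ := by
        gcongr
        exact (ENat.toENNReal_le.2 (encard_initSeg_image_blockSet_le ha hfin τ r)).trans_eq
          (ENat.toENNReal_coe _)
    _ ≤ 2⁻¹ ^ r := natCast_mul_inv_le_inv_two_pow (two_pow_mul_prod_ncard_le h1 hsm ha hJ r)

lemma hasSmallCovers_tail (h1 : ∀ n, 1 ≤ h n) (hsm : ∀ a b : ℕ, h a * h b ≤ h (a + b))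
    (ha : Monotone a) (hfin : ∀ n, (J n).Finite)
    (hJ : ∀ n ≥ N, 2 * (J n).ncard ≤ h (a (n + 1) - a n)) (τ : Fin (a N) → ℕ) :
    HasSmallCovers h
      {x | (∀ i : Fin (a N), x i = τ i) ∧ ∀ n ≥ N, restrIco x (a n) (a (n + 1)) ∈ J n} := by
  intro ε hε
  obtain ⟨r, hr⟩ := ENNReal.exists_inv_two_pow_lt hε.ne'
  obtain ⟨S, hS, hcover⟩ := exists_cover_blockSet h1 hsm ha hfin hJ τ r
  exact ⟨S, hS.trans_lt hr, fun x hx => hcover ⟨hx.1, fun t _ => hx.2 _ (Nat.le_add_right N t)⟩⟩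

end Blocks

lemma eventually_two_mul_le_of_summable {c b : ℕ → ℕ} (hb : ∀ n, 1 ≤ b n)
    (hsum : Summable fun n => (c n : ℝ) / (b n : ℝ)) : ∀ᶠ n in atTop, 2 * c n ≤ b n := by
  filter_upwards [hsum.tendsto_atTop_zero.eventually (gt_mem_nhds (by norm_num : (0 : ℝ) < 1 / 2))]
    with n hn
  rw [div_lt_iff₀ (by exact_mod_cast hb n)] at hn
  exact_mod_cast (by linarith : (2 * c n : ℝ) ≤ b n)

theorem stmt10 (h : ℕ → ℕ) (h1 : ∀ n, 1 ≤ h n) (hlim : LimsupInfty h)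
    (hsm : ∀ a b : ℕ, h a * h b ≤ h (a + b)) :
    ∀ F : Set (ℕ → ℕ), fE h F → fN h F := by
  rintro F ⟨a, -, ha, J, -, hfin, hsum, hF⟩
  obtain ⟨N₀, hN₀⟩ := eventually_atTop.1 (eventually_two_mul_le_of_summable (fun _ => h1 _) hsum)
  refine HasSmallCovers.fN hlim (HasSmallCovers.mono (HasSmallCovers.iUnion
    fun p : Σ N, Fin (a (N₀ + N)) → ℕ => hasSmallCovers_tail h1 hsm ha.monotone hfin
      (fun n hn => hN₀ n (by omega)) p.2) ?_)
  intro x hx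
  obtain ⟨N, hN⟩ := eventually_atTop.1 (hF hx)
  exact mem_iUnion.2 ⟨⟨N, fun i => x i⟩, fun i => rfl, fun n hn => hN n (le_add_self.trans hn)⟩
end

section
/- There exists a set A ∈ fE(n ↦ n²) such that for every polynomial p with real coefficients satisfying p(n) ≥ 1 for all n ∈ ℕ, A ∉ fN(n ↦ p(n)); in particular, fE(n ↦ n²) ⊄ fN(p) for any such polynomial p. -/
/-!
Let `G` consist of the first `n` points of each block `[2^n - 1, 2^(n+1) - 1)` and let
`A = {x | x ≤ 𝟙_G}`. On the `n`-th block `A` has at most `2^n` restrictions, and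
`∑ 2^n / (2^n)^2 < ∞`, so `A ∈ fE(n²)`. The uniform product measure on `A` gives a cylinder of
length `m` mass `2^(-g m)`, where `g m = |G ∩ [0, m)| ≳ (log₂ m)² / 2` outgrows every polynomial;
so every cover of `A` by cylinders `[σ_k]` has `∑ 2^(-g |σ_k|) ≥ 1`, which bounds
`∑ 1 / p |σ_k|` from below by a positive constant.
-/

open Filter Set

/-- The family `fN(h)` for a real-valued parameter `h`. -/
def fNR (h : ℕ → ℝ) (F : Set (ℕ → ℕ)) : Prop :=
  ∀ ε : ℝ, 0 < ε →
    ∃ σ : ℕ → List ℕ,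
      Summable (fun n => (1 : ℝ) / h (σ n).length) ∧
      (∑' n, (1 : ℝ) / h (σ n).length) < ε ∧
      F ⊆ ⋃ n, cylinder (σ n)

open scoped ENNReal

lemma cylinder_eq_pi (σ : List ℕ) :
    cylinder σ = Set.pi (Finset.range σ.length : Set ℕ) (fun i => {σ.getD i 0}) := by
  ext x
  simp only [cylinder, Set.mem_pi, Finset.coe_range, Set.mem_Iio,
    Set.mem_singleton_iff, Fin.forall_iff, List.get_eq_getElem]
  exact forall₂_congr fun i hi => by rw [List.getD_eq_getElem _ _ hi]

lemma one_le_tsum_of_pi_subset_iUnion_cylinder (S : ℕ → Finset ℕ) (hS : ∀ i, (S i).Nonempty)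
    (σ : ℕ → List ℕ) (hcov : Set.univ.pi (fun i => (S i : Set ℕ)) ⊆ ⋃ k, cylinder (σ k)) :
    1 ≤ ∑' k, ∏ i ∈ Finset.range (σ k).length, ((S i).card : ℝ≥0∞)⁻¹ := by
  let ν i := (PMF.uniformOfFinset (S i) (hS i)).toMeasure
  let μ := MeasureTheory.Measure.infinitePi ν
  have hpi : μ (Set.univ.pi (fun i => (S i : Set ℕ))) = 1 := by
    have hν (i : ℕ) : ν i (S i) = 1 :=
      (PMF.toMeasure_apply_eq_one_iff _ (Finset.measurableSet _)).2
        (by rw [PMF.support_uniformOfFinset])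
    simp only [μ, MeasureTheory.Measure.infinitePi_pi_univ _ (fun _ => Finset.measurableSet _),
      hν, tprod_one]
  have hcyl (k : ℕ) :
      μ (cylinder (σ k)) ≤ ∏ i ∈ Finset.range (σ k).length, ((S i).card : ℝ≥0∞)⁻¹ := by
    rw [cylinder_eq_pi,
      MeasureTheory.Measure.infinitePi_pi _ (fun _ _ => measurableSet_singleton _)]
    refine Finset.prod_le_prod' fun i _ => ?_
    rw [PMF.toMeasure_apply_singleton _ _ (measurableSet_singleton _), PMF.uniformOfFinset_apply]
    split_ifs <;> simp
  calc 1 = μ (Set.univ.pi (fun i => (S i : Set ℕ))) := hpi.symm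
    _ ≤ μ (⋃ k, cylinder (σ k)) := MeasureTheory.measure_mono hcov
    _ ≤ ∑' k, μ (cylinder (σ k)) := MeasureTheory.measure_iUnion_le _
    _ ≤ _ := ENNReal.tsum_le_tsum hcyl

lemma Iic_indicator_subset_image_powerset {α : Type*} (s : Finset α) :
    Set.Iic ((s : Set α).indicator 1 : α → ℕ) ⊆
      (fun t : Finset α => ((t : Set α).indicator 1 : α → ℕ)) '' (s.powerset : Set (Finset α)) := by
  classical
  intro y hy
  refine ⟨s.filter (fun i => y i = 1), Finset.mem_powerset.2 (Finset.filter_subset _ _),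
    funext fun i => ?_⟩
  have hyi := hy i
  simp only [Set.indicator_apply, Finset.mem_coe, Finset.mem_filter, Pi.one_apply] at hyi ⊢
  split_ifs at hyi ⊢ <;> grind

/-- `i` lies in the block `[2^n - 1, 2^(n+1) - 1)` with `n = log₂ (i + 1)`, and is free iff it is
one of the first `n` points of that block. -/
def freeBit (i : ℕ) : ℕ :=
  if i + 1 < 2 ^ Nat.log 2 (i + 1) + Nat.log 2 (i + 1) then 1 else 0

def freeCount (m : ℕ) : ℕ := ∑ i ∈ Finset.range m, freeBit i

lemma freeBit_le_one (i : ℕ) : freeBit i ≤ 1 := by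
  unfold freeBit; split_ifs <;> omega

lemma freeBit_of_mem_Ico {n i : ℕ} (hi : i ∈ Finset.Ico (2 ^ n - 1) (2 ^ (n + 1) - 1)) :
    freeBit i = if i < 2 ^ n - 1 + n then 1 else 0 := by
  rw [Finset.mem_Ico, pow_succ] at hi
  have hlog : Nat.log 2 (i + 1) = n :=
    Nat.log_eq_of_pow_le_of_lt_pow (by omega) (by rw [pow_succ]; omega)
  have hpos : 1 ≤ 2 ^ n := Nat.one_le_two_pow
  simp only [freeBit, hlog]
  split_ifs <;> omega

lemma freeCount_mono : Monotone freeCount := fun _ _ h =>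
  Finset.sum_le_sum_of_subset (Finset.range_subset_range.2 h)

lemma sum_range_le_freeCount_two_pow_sub_one (N : ℕ) :
    ∑ n ∈ Finset.range N, n ≤ freeCount (2 ^ N - 1) := by
  induction N with
  | zero => simp
  | succ N ih =>
    have hpos : 1 ≤ 2 ^ N := Nat.one_le_two_pow
    have hNlt : N < 2 ^ N := Nat.lt_two_pow_self
    have hsplit : 2 ^ (N + 1) - 1 = (2 ^ N - 1) + 2 ^ N := by rw [pow_succ]; omega
    have hfree (j : ℕ) (hj : j ∈ Finset.range N) : 1 = freeBit (2 ^ N - 1 + j) := by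
      rw [Finset.mem_range] at hj
      rw [freeBit_of_mem_Ico (n := N) (by rw [Finset.mem_Ico, pow_succ]; omega), if_pos (by omega)]
    have hblock : N ≤ ∑ j ∈ Finset.range (2 ^ N), freeBit (2 ^ N - 1 + j) :=
      calc N = ∑ j ∈ Finset.range N, 1 := by simp
        _ = ∑ j ∈ Finset.range N, freeBit (2 ^ N - 1 + j) := Finset.sum_congr rfl hfree
        _ ≤ _ := Finset.sum_le_sum_of_subset (Finset.range_subset_range.2 hNlt.le)
    rw [Finset.sum_range_succ, hsplit, freeCount, Finset.sum_range_add]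
    exact Nat.add_le_add ih hblock

lemma eventually_pow_le_two_pow_freeCount (d : ℕ) :
    ∀ᶠ m in Filter.atTop, m ^ d ≤ 2 ^ freeCount m := by
  filter_upwards [Filter.eventually_ge_atTop (2 ^ (2 * d + 3))] with m hm
  set N := Nat.log 2 (m + 1)
  have hN : 2 * d + 3 ≤ N := Nat.le_log_of_pow_le one_lt_two (by omega)
  have hmN : m < 2 ^ (N + 1) := (Nat.lt_pow_succ_log_self one_lt_two _).trans' (by omega)
  have h2N : 2 ^ N ≤ m + 1 := Nat.pow_log_le_self 2 (by omega)
  have hcount : freeCount (2 ^ N - 1) ≤ freeCount m := freeCount_mono (by omega)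
  have hgauss := Finset.sum_range_id_mul_two N
  have harith : (N + 1) * d ≤ ∑ n ∈ Finset.range N, n := by
    obtain ⟨k, hk⟩ : ∃ k, N = k + 1 := ⟨N - 1, by omega⟩
    rw [hk, Nat.add_sub_cancel] at hgauss
    rw [hk] at hN ⊢
    nlinarith
  calc m ^ d ≤ (2 ^ (N + 1)) ^ d := Nat.pow_le_pow_left hmN.le d
    _ = 2 ^ ((N + 1) * d) := (pow_mul ..).symm
    _ ≤ 2 ^ freeCount m := Nat.pow_le_pow_right two_pos
        (harith.trans ((sum_range_le_freeCount_two_pow_sub_one N).trans hcount))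

open Asymptotics in
lemma exists_eval_le_mul_two_pow_freeCount (p : Polynomial ℝ) :
    ∃ C, ∀ m : ℕ, p.eval (m : ℝ) ≤ C * 2 ^ freeCount m := by
  set d := p.natDegree
  have hpoly : (fun m : ℕ => p.eval (m : ℝ)) =O[Filter.atTop] (fun m : ℕ => (m : ℝ) ^ d) := by
    have := (Polynomial.isBigO_atTop_of_degree_le (P := p) (Q := Polynomial.X ^ d)
      (by rw [Polynomial.degree_X_pow]; exact p.degree_le_natDegree)).comp_tendsto
      tendsto_natCast_atTop_atTop
    simpa [Function.comp_def] using this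
  have hpow :
      (fun m : ℕ => (m : ℝ) ^ d) =O[Filter.atTop] (fun m : ℕ => (2 : ℝ) ^ freeCount m) := by
    refine IsBigO.of_bound 1 ?_
    filter_upwards [eventually_pow_le_two_pow_freeCount d] with m hm
    simp only [norm_pow, Real.norm_natCast, Real.norm_ofNat, one_mul]
    exact_mod_cast hm
  obtain ⟨C, hC⟩ :=
    (isBigO_nat_atTop_iff fun m h => absurd h (by positivity)).1 (hpoly.trans hpow)
  refine ⟨C, fun m => (le_abs_self _).trans ?_⟩
  simpa using hC m

lemma restrIco_le_indicator {x : ℕ → ℕ} (hx : x ≤ freeBit) (n : ℕ) :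
    restrIco x (2 ^ n - 1) (2 ^ (n + 1) - 1) ≤
      ((Finset.Ico (2 ^ n - 1) (2 ^ n - 1 + n) : Set ℕ).indicator 1) := by
  intro i
  unfold restrIco
  split_ifs with hi
  · have hxi := hx i
    rw [freeBit_of_mem_Ico (Finset.mem_Ico.2 hi)] at hxi
    simp only [Set.indicator, Finset.coe_Ico, Set.mem_Ico, Pi.one_apply]
    split_ifs at hxi ⊢ <;> omega
  · exact Nat.zero_le _

lemma fE_Iic_freeBit : fE (fun n => n ^ 2) (Set.Iic freeBit) := by
  let J n := (fun x => restrIco x (2 ^ n - 1) (2 ^ (n + 1) - 1)) '' Set.Iic freeBit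
  have hJ (n : ℕ) : J n ⊆ (fun t : Finset ℕ => ((t : Set ℕ).indicator 1 : ℕ → ℕ)) ''
      ((Finset.Ico (2 ^ n - 1) (2 ^ n - 1 + n)).powerset : Set (Finset ℕ)) :=
    Set.image_subset_iff.2 fun x hx =>
      Iic_indicator_subset_image_powerset _ (restrIco_le_indicator hx n)
  have hfin (n : ℕ) : (J n).Finite := ((Finset.finite_toSet _).image _).subset (hJ n)
  have hcard (n : ℕ) : (J n).ncard ≤ 2 ^ n :=
    calc (J n).ncard ≤ _ := Set.ncard_le_ncard (hJ n) ((Finset.finite_toSet _).image _)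
      _ ≤ _ := Set.ncard_image_le (Finset.finite_toSet _)
      _ = 2 ^ n := by
        rw [Set.ncard_coe_finset, Finset.card_powerset, Nat.card_Ico, Nat.add_sub_cancel_left]
  have hlen (n : ℕ) : 2 ^ (n + 1) - 1 - (2 ^ n - 1) = 2 ^ n := by
    have := Nat.one_le_two_pow (n := n); rw [pow_succ]; omega
  refine ⟨fun n => 2 ^ n - 1, by simp, ?_, J, ?_, hfin, ?_, ?_⟩
  · exact strictMono_nat_of_lt_succ fun n => by
      have := Nat.one_le_two_pow (n := n); rw [pow_succ]; omega
  · rintro n _ ⟨x, -, rfl⟩ i hi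
    exact if_neg hi
  · refine Summable.of_nonneg_of_le (fun _ => by positivity) (fun n => ?_) summable_geometric_two
    rw [hlen, div_le_iff₀ (by positivity)]
    calc ((J n).ncard : ℝ) ≤ 2 ^ n := by exact_mod_cast hcard n
      _ = (1 / 2) ^ n * (((2 ^ n) ^ 2 : ℕ) : ℝ) := by
        push_cast; rw [sq, ← mul_assoc, ← mul_pow]; norm_num
  · exact fun x hx => Filter.Eventually.of_forall fun n => ⟨x, hx, rfl⟩

lemma one_le_tsum_of_Iic_freeBit_subset (σ : ℕ → List ℕ)
    (hcov : Set.Iic freeBit ⊆ ⋃ k, cylinder (σ k))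
    (hsum : Summable fun k => ((2 : ℝ) ^ freeCount (σ k).length)⁻¹) :
    1 ≤ ∑' k, ((2 : ℝ) ^ freeCount (σ k).length)⁻¹ := by
  let S i := Finset.range (freeBit i + 1)
  have hS : Set.univ.pi (fun i => (S i : Set ℕ)) = Set.Iic freeBit := by
    ext x
    simp [S, Pi.le_def]
  have hweight (m : ℕ) : ∏ i ∈ Finset.range m, ((S i).card : ℝ≥0∞)⁻¹ =
      ENNReal.ofReal ((2 : ℝ) ^ freeCount m)⁻¹ := by
    have hcard (i : ℕ) : ((S i).card : ℝ≥0∞) = 2 ^ freeBit i := by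
      rcases Nat.le_one_iff_eq_zero_or_eq_one.1 (freeBit_le_one i) with h | h <;> simp [S, h]
    rw [ENNReal.ofReal_inv_of_pos (by positivity), ENNReal.ofReal_pow zero_le_two,
      ENNReal.ofReal_ofNat, freeCount, ← Finset.prod_pow_eq_pow_sum, ← ENNReal.prod_inv_distrib]
    · simp [hcard]
    · intro i _ j _ _; simp
  have h := one_le_tsum_of_pi_subset_iUnion_cylinder S (fun _ => Finset.nonempty_range_add_one) σ
    (hS ▸ hcov)
  simp only [hweight] at h
  rw [← ENNReal.ofReal_tsum_of_nonneg (fun _ => by positivity) hsum] at h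
  exact ENNReal.one_le_ofReal.1 h

theorem stmt11 :
    ∃ A : Set (ℕ → ℕ), fE (fun n => n ^ 2) A ∧
      ∀ p : Polynomial ℝ, (∀ n : ℕ, 1 ≤ p.eval (n : ℝ)) →
        ¬ fNR (fun n => p.eval (n : ℝ)) A := by
  refine ⟨Set.Iic freeBit, fE_Iic_freeBit, fun p hp hfN => ?_⟩
  have hp0 (n : ℕ) : 0 < p.eval (n : ℝ) := zero_lt_one.trans_le (hp n)
  obtain ⟨C, hC⟩ := exists_eval_le_mul_two_pow_freeCount p
  have hC0 : 0 < C := by simpa [freeCount] using (hp0 0).trans_le (hC 0)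
  obtain ⟨σ, hsum, hlt, hcov⟩ := hfN C⁻¹ (inv_pos.2 hC0)
  let w k := ((2 : ℝ) ^ freeCount (σ k).length)⁻¹
  have hle (k : ℕ) : w k ≤ C * (1 / p.eval ((σ k).length : ℝ)) := by
    rw [mul_one_div, le_div_iff₀ (hp0 _), ← div_eq_inv_mul, div_le_iff₀ (by positivity)]
    exact hC _
  have hsumC := hsum.mul_left C
  have hsumw : Summable w := hsumC.of_nonneg_of_le (fun _ => by positivity) hle
  refine lt_irrefl (1 : ℝ) ?_
  calc (1 : ℝ) ≤ ∑' k, w k := one_le_tsum_of_Iic_freeBit_subset σ hcov hsumw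
    _ ≤ ∑' k, C * (1 / p.eval ((σ k).length : ℝ)) := hsumw.tsum_le_tsum hle hsumC
    _ = C * ∑' k, 1 / p.eval ((σ k).length : ℝ) := tsum_mul_left
    _ < C * C⁻¹ := mul_lt_mul_of_pos_left hlt hC0
    _ = 1 := mul_inv_cancel₀ hC0.ne'
end
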